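/- arXiv:2106.10323 — 2 statements merged into one kernel-verified Lean document; each statement's English description precedes it below -/
import Mathlib

section
/- There is a universal constant c > 0 with the following property. For every finite connected graph H with at least one edge and every function f : V(H) → ℝ, one has Σ_{v∈V(H)} (f(v) − f̄_H)² deg_H(v) ≤ (c / I_H²) Σ_{e∈E(H)} |∇f(e)|², where f̄_H = |V(H)|_E^{−1} Σ_{v∈V(H)} f(v) deg_H(v) and |V(H)|_E = Σ_{v∈V(H)} deg_H(v). -/
set_option linter.unusedSectionVars false
set_option maxHeartbeats 1000000


open scoped BigOperators
open scoped Classical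

noncomputable section

namespace RSW
open Finset

variable {V : Type*}

/-- `|A|_E`: the sum of the degrees of the vertices of the finite graph `H` in `A`. -/
def degSum [Fintype V] (H : SimpleGraph V) [DecidableRel H.Adj] (A : Finset V) : ℕ :=
  ∑ v ∈ A, H.degree v

/-- `|∂_E(A, H∖A)|`: the number of edges of `H` with exactly one endpoint in `A`. -/
def bCount [Fintype V] [DecidableEq V] (H : SimpleGraph V) [DecidableRel H.Adj]
    (A : Finset V) : ℕ :=
  ∑ v ∈ A, (H.neighborFinset v \ A).card

/-- `i_H(A) = |∂_E(A, H∖A)| / |A|_E`. -/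
def iH [Fintype V] [DecidableEq V] (H : SimpleGraph V) [DecidableRel H.Adj]
    (A : Finset V) : ℝ :=
  (bCount H A : ℝ) / (degSum H A : ℝ)

/-- The isoperimetric constant `I_H`: the infimum of `i_H(A)` over sets `A` with
`0 < |A|_E ≤ |V(H)|_E / 2` such that both `A` and its complement induce connected
subgraphs of `H`. -/
def isoC [Fintype V] [DecidableEq V] (H : SimpleGraph V) [DecidableRel H.Adj] : ℝ :=
  sInf {x : ℝ | ∃ A : Finset V, 0 < degSum H A ∧
    2 * degSum H A ≤ degSum H Finset.univ ∧
    (H.induce (A : Set V)).Connected ∧ (H.induce ((↑A : Set V)ᶜ)).Connected ∧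
    x = iH H A}

/-- `|∇f(e)|²` for an (unoriented) edge `e`. -/
def gradSq (f : V → ℝ) : Sym2 V → ℝ :=
  Sym2.lift ⟨fun u w => (f w - f u)^2, by intro u w; ring⟩

/-- The degree-weighted average `f̄` of `f`. -/
def fbar [Fintype V] (H : SimpleGraph V) [DecidableRel H.Adj] (f : V → ℝ) : ℝ :=
  (∑ v : V, f v * (H.degree v : ℝ)) / (degSum H Finset.univ : ℝ)

section Aux
variable {V : Type*} [Fintype V] [DecidableEq V] (H : SimpleGraph V) [DecidableRel H.Adj]

lemma sum_dart_fst (F : V → V → ℝ) :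
    ∑ d : H.Dart, F d.fst d.snd = ∑ v, ∑ w ∈ H.neighborFinset v, F v w := by
  rw [← Finset.sum_fiberwise_of_maps_to (g := fun d : H.Dart => d.fst)
      (fun d _ => Finset.mem_univ d.fst)]
  refine Finset.sum_congr rfl fun v _ => ?_
  have h1 : (Finset.univ.filter fun d : H.Dart => d.fst = v)
      = Finset.univ.image (H.dartOfNeighborSet v) := H.dart_fst_fiber v
  rw [h1, Finset.sum_image (fun a _ b _ h => H.dartOfNeighborSet_injective v h)]
  rw [← Finset.sum_coe_sort (H.neighborFinset v) (fun w => F v w)]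
  refine Fintype.sum_equiv (Equiv.subtypeEquivRight ?_) _ _ ?_
  · intro w; simp [SimpleGraph.mem_neighborFinset]
  · intro w; rfl

lemma sum_dart_edge (q : Sym2 V → ℝ) :
    ∑ d : H.Dart, q d.edge = 2 * ∑ e ∈ H.edgeFinset, q e := by
  rw [← Finset.sum_fiberwise_of_maps_to (g := fun d : H.Dart => d.edge)
      (fun d _ => SimpleGraph.mem_edgeFinset.mpr d.edge_mem)]
  rw [Finset.mul_sum]
  refine Finset.sum_congr rfl fun e he => ?_
  have hc : (Finset.univ.filter fun d : H.Dart => d.edge = e).card = 2 :=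
    H.dart_edge_fiber_card e (by rwa [← SimpleGraph.mem_edgeFinset])
  calc ∑ d ∈ Finset.univ.filter (fun d : H.Dart => d.edge = e), q d.edge
      = ∑ d ∈ Finset.univ.filter (fun d : H.Dart => d.edge = e), q e :=
        Finset.sum_congr rfl fun d hd => by rw [(Finset.mem_filter.mp hd).2]
    _ = 2 * q e := by rw [Finset.sum_const, hc]; simp [mul_comm]

lemma pair_sum_eq (q : Sym2 V → ℝ) :
    ∑ v, ∑ w ∈ H.neighborFinset v, q s(v, w) = 2 * ∑ e ∈ H.edgeFinset, q e := by
  rw [← sum_dart_fst H (fun v w => q s(v, w)), ← sum_dart_edge H q]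
  rfl

lemma sum_swap_nbhd (F : V → V → ℝ) :
    ∑ v, ∑ w ∈ H.neighborFinset v, F v w = ∑ v, ∑ w ∈ H.neighborFinset v, F w v := by
  rw [← sum_dart_fst H F, ← sum_dart_fst H (fun v w => F w v)]
  exact Finset.sum_nbij' (fun d => d.symm) (fun d => d.symm) (by simp) (by simp)
    (by simp) (by simp) (by simp [SimpleGraph.Dart.symm])


lemma degSum_mono {A B : Finset V} (h : A ⊆ B) : degSum H A ≤ degSum H B :=
  Finset.sum_le_sum_of_subset h

lemma degSum_sdiff_add {A B : Finset V} (h : A ⊆ B) :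
    degSum H (B \ A) + degSum H A = degSum H B :=
  Finset.sum_sdiff h

lemma bCount_eq_indicator (S : Finset V) :
    (bCount H S : ℝ)
      = ∑ v, ∑ w ∈ H.neighborFinset v, (if v ∈ S ∧ w ∉ S then (1:ℝ) else 0) := by
  have key : ∀ v, (∑ w ∈ H.neighborFinset v, (if v ∈ S ∧ w ∉ S then (1:ℝ) else 0))
      = if v ∈ S then ((H.neighborFinset v \ S).card : ℝ) else 0 := by
    intro v
    by_cases hv : v ∈ S
    · simp only [hv, true_and, if_true]
      rw [Finset.sum_boole, Finset.sdiff_eq_filter]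
    · simp [hv]
  simp only [key]
  rw [Finset.sum_ite_mem, Finset.univ_inter, bCount]
  push_cast
  rfl


lemma bCount_compl (S : Finset V) : bCount H (Finset.univ \ S) = bCount H S := by
  have hreal : (bCount H (Finset.univ \ S) : ℝ) = (bCount H S : ℝ) := by
    rw [bCount_eq_indicator, bCount_eq_indicator,
      sum_swap_nbhd H (fun v w => if v ∈ Finset.univ \ S ∧ w ∉ Finset.univ \ S
        then (1:ℝ) else 0)]
    refine Finset.sum_congr rfl fun v _ => Finset.sum_congr rfl fun w _ => ?_
    refine if_congr ?_ rfl rfl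
    simp only [Finset.mem_sdiff, Finset.mem_univ, true_and, not_and, not_not]
    tauto
  exact_mod_cast hreal

lemma degSum_univ_pos (hconn : H.Connected) (hne : H.edgeFinset.Nonempty) :
    0 < degSum H Finset.univ := by
  obtain ⟨e, he⟩ := id hne
  rw [SimpleGraph.mem_edgeFinset] at he
  induction e with
  | h a b =>
    have h0 : 0 < H.degree a := by rw [H.degree_pos_iff_exists_adj]; exact ⟨b, he⟩
    refine lt_of_lt_of_le h0 ?_
    exact Finset.single_le_sum (f := fun v => H.degree v) (fun v _ => Nat.zero_le _)
      (Finset.mem_univ a)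

lemma walk_boundary {S : Finset V} {a b : V} (p : H.Walk a b) (ha : a ∈ S) (hb : b ∉ S) :
    ∃ u ∈ S, ∃ w, w ∉ S ∧ H.Adj u w := by
  induction p with
  | nil => exact absurd ha hb
  | @cons u v w huv p ih =>
    by_cases hv : v ∈ S
    · exact ih hv hb
    · exact ⟨u, ha, v, hv, huv⟩

lemma exists_boundary_edge {S : Finset V} (hconn : H.Connected) (hS : S.Nonempty)
    (hS' : S ≠ Finset.univ) : ∃ u ∈ S, ∃ w, w ∉ S ∧ H.Adj u w := by
  obtain ⟨u0, hu0⟩ := hS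
  obtain ⟨w0, hw0⟩ : ∃ w0, w0 ∉ S := by
    by_contra h; push_neg at h; exact hS' (Finset.eq_univ_iff_forall.mpr h)
  obtain ⟨p⟩ := hconn u0 w0
  exact walk_boundary H p hu0 hw0

lemma exists_component (B : Finset V) (hB : B.Nonempty) :
    ∃ C : Finset V, C ⊆ B ∧ C.Nonempty ∧ (H.induce (C : Set V)).Connected ∧
      ∀ u ∈ C, ∀ w ∈ B, w ∉ C → ¬ H.Adj u w := by
  obtain ⟨v0, hv0⟩ := hB
  set C := B.filter (fun w => ∃ p : H.Walk v0 w, ∀ x ∈ p.support, x ∈ B) with hC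
  have hv0C : v0 ∈ C := by
    refine Finset.mem_filter.mpr ⟨hv0, ⟨SimpleGraph.Walk.nil, ?_⟩⟩
    intro x hx
    rw [SimpleGraph.Walk.support_nil, List.mem_singleton] at hx
    exact hx ▸ hv0
  have hclose : ∀ u ∈ C, ∀ w ∈ B, H.Adj u w → w ∈ C := by
    intro u hu w hw hadj
    obtain ⟨hu', p, hp⟩ := Finset.mem_filter.mp hu
    refine Finset.mem_filter.mpr ⟨hw, p.concat hadj, ?_⟩
    intro x hx
    rw [SimpleGraph.Walk.support_concat, List.mem_append,
      List.mem_singleton] at hx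
    rcases hx with hx | rfl
    · exact hp x hx
    · exact hw
  have hsupp : ∀ w ∈ C, ∃ p : H.Walk v0 w, ∀ x ∈ p.support, x ∈ C := by
    intro w hw
    obtain ⟨hwB, p, hp⟩ := Finset.mem_filter.mp hw
    refine ⟨p, fun x hx => ?_⟩
    exact Finset.mem_filter.mpr ⟨hp x hx, p.takeUntil x hx,
      fun y hy => hp y (SimpleGraph.Walk.support_takeUntil_subset p hx hy)⟩
  have hconnC : (H.induce (C : Set V)).Connected := by
    apply SimpleGraph.induce_connected_of_patches v0 (show v0 ∈ (C : Set V) from hv0C)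
    intro v hv
    obtain ⟨p, hp⟩ := hsupp v hv
    refine ⟨{x | x ∈ p.support}, fun x hx => hp x hx, p.start_mem_support,
      p.end_mem_support, ?_⟩
    exact (p.connected_induce_support).preconnected _ _
  exact ⟨C, Finset.filter_subset _ _, ⟨v0, hv0C⟩, hconnC,
    fun u hu w hwB hwC hadj => hwC (hclose u hu w hwB hadj)⟩

lemma exists_partition : ∀ (n : ℕ) (B : Finset V), B.card ≤ n →
    ∃ 𝒟 : Finset (Finset V),
      (∀ D ∈ 𝒟, D.Nonempty ∧ D ⊆ B ∧ (H.induce (D : Set V)).Connected) ∧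
      (∀ D ∈ 𝒟, ∀ u ∈ D, ∀ w ∈ B, w ∉ D → ¬ H.Adj u w) ∧
      (𝒟 : Set (Finset V)).PairwiseDisjoint id ∧
      B = 𝒟.biUnion id := by
  intro n
  induction n with
  | zero =>
    intro B hB
    have : B = ∅ := Finset.card_eq_zero.mp (Nat.le_zero.mp hB)
    subst this
    exact ⟨∅, by simp, by simp, by simp, by simp⟩
  | succ n ih =>
    intro B hB
    by_cases hBe : B.Nonempty
    · obtain ⟨C, hCB, hCne, hCconn, hCedge⟩ := exists_component H B hBe
      have hcard : (B \ C).card ≤ n := by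
        have h1 : (B \ C).card < B.card :=
          Finset.card_lt_card (Finset.sdiff_ssubset hCB hCne)
        omega
      obtain ⟨𝒟', h1, h2, h3, h4⟩ := ih (B \ C) hcard
      have hCnot : ∀ D ∈ 𝒟', Disjoint C D := by
        intro D hD
        exact Finset.disjoint_of_subset_right ((h1 D hD).2.1)
          (Finset.disjoint_sdiff)
      refine ⟨insert C 𝒟', ?_, ?_, ?_, ?_⟩
      · intro D hD
        rcases Finset.mem_insert.mp hD with rfl | hD
        · exact ⟨hCne, hCB, hCconn⟩
        · exact ⟨(h1 D hD).1, (h1 D hD).2.1.trans (Finset.sdiff_subset), (h1 D hD).2.2⟩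
      · intro D hD u hu w hwB hwD hadj
        rcases Finset.mem_insert.mp hD with rfl | hD
        · exact hCedge u hu w hwB hwD hadj
        · by_cases hwC : w ∈ C
          · have huB : u ∈ B := ((h1 D hD).2.1.trans (Finset.sdiff_subset)) hu
            have huC : u ∉ C := fun h =>
              (Finset.disjoint_left.mp (hCnot D hD)) h hu
            exact hCedge w hwC u huB huC hadj.symm
          · exact h2 D hD u hu w (Finset.mem_sdiff.mpr ⟨hwB, hwC⟩) hwD hadj
      · rw [Finset.coe_insert]
        refine h3.insert ?_
        intro D hD hne
        exact (hCnot D hD).mono le_rfl le_rfl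
      · rw [Finset.biUnion_insert, ← h4, id]
        exact (Finset.union_sdiff_of_subset hCB).symm
    · rw [Finset.not_nonempty_iff_eq_empty] at hBe
      subst hBe
      exact ⟨∅, by simp, by simp, by simp, by simp⟩

lemma degSum_partition {B : Finset V} {𝒟 : Finset (Finset V)}
    (h3 : (𝒟 : Set (Finset V)).PairwiseDisjoint id) (h4 : B = 𝒟.biUnion id) :
    degSum H B = ∑ D ∈ 𝒟, degSum H D := by
  rw [degSum, h4, Finset.sum_biUnion h3]; rfl

lemma bCount_partition {B : Finset V} {𝒟 : Finset (Finset V)}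
    (h1 : ∀ D ∈ 𝒟, D.Nonempty ∧ D ⊆ B ∧ (H.induce (D : Set V)).Connected)
    (h2 : ∀ D ∈ 𝒟, ∀ u ∈ D, ∀ w ∈ B, w ∉ D → ¬ H.Adj u w)
    (h3 : (𝒟 : Set (Finset V)).PairwiseDisjoint id) (h4 : B = 𝒟.biUnion id) :
    bCount H B = ∑ D ∈ 𝒟, bCount H D := by
  have key : ∀ D ∈ 𝒟, ∀ v ∈ D, H.neighborFinset v \ D = H.neighborFinset v \ B := by
    intro D hD v hv
    ext w
    simp only [Finset.mem_sdiff, SimpleGraph.mem_neighborFinset]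
    constructor
    · rintro ⟨hadj, hwD⟩
      refine ⟨hadj, fun hwB => ?_⟩
      exact h2 D hD v hv w hwB hwD hadj
    · rintro ⟨hadj, hwB⟩
      exact ⟨hadj, fun hwD => hwB ((h1 D hD).2.1 hwD)⟩
  calc bCount H B = ∑ v ∈ B, (H.neighborFinset v \ B).card := rfl
    _ = ∑ D ∈ 𝒟, ∑ v ∈ D, (H.neighborFinset v \ B).card := by
        rw [h4, Finset.sum_biUnion h3]; rfl
    _ = ∑ D ∈ 𝒟, bCount H D := by
        refine Finset.sum_congr rfl fun D hD => ?_
        exact (Finset.sum_congr rfl fun v hv => by rw [← key D hD v hv]).symm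


lemma bCount_pos {S : Finset V} {u w : V} (hu : u ∈ S) (hw : w ∉ S) (hadj : H.Adj u w) :
    0 < bCount H S := by
  refine Finset.sum_pos' (fun v _ => Nat.zero_le _) ⟨u, hu, ?_⟩
  exact Finset.card_pos.mpr ⟨w, Finset.mem_sdiff.mpr ⟨(H.mem_neighborFinset u w).mpr hadj, hw⟩⟩

lemma degree_pos (hconn : H.Connected) (hne : H.edgeFinset.Nonempty) (v : V) :
    0 < H.degree v := by
  obtain ⟨e, he⟩ := hne
  rw [SimpleGraph.mem_edgeFinset] at he
  induction e with
  | h a b =>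
    have hab : H.Adj a b := he
    have : ∃ w, w ≠ v := by
      by_cases h : a = v
      · exact ⟨b, fun hbv => H.irrefl (by rwa [h, hbv] at hab)⟩
      · exact ⟨a, h⟩
    obtain ⟨w, hwv⟩ := this
    obtain ⟨p⟩ := hconn v w
    rw [H.degree_pos_iff_exists_adj]
    cases p with
    | nil => exact absurd rfl (Ne.symm hwv)
    | cons h q => exact ⟨_, h⟩

-- each piece of a partition of (univ \ C) is adjacent to C

lemma piece_adj_C {C : Finset V} (hconn : H.Connected) (hCne : C.Nonempty)
    {𝒟 : Finset (Finset V)}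
    (h1 : ∀ D ∈ 𝒟, D.Nonempty ∧ D ⊆ univ \ C ∧ (H.induce (D : Set V)).Connected)
    (h2 : ∀ D ∈ 𝒟, ∀ u ∈ D, ∀ w ∈ univ \ C, w ∉ D → ¬ H.Adj u w)
    {D : Finset V} (hD : D ∈ 𝒟) :
    ∃ u ∈ D, ∃ w ∈ C, H.Adj u w := by
  obtain ⟨hDne, hDsub, _⟩ := h1 D hD
  have hDuniv : D ≠ univ := by
    rintro rfl
    obtain ⟨c, hc⟩ := hCne
    have := hDsub (Finset.mem_univ c)
    simp at this
    exact this hc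
  obtain ⟨u, hu, w, hw, hadj⟩ := exists_boundary_edge H hconn hDne hDuniv
  refine ⟨u, hu, w, ?_, hadj⟩
  by_contra hwC
  exact h2 D hD u hu w (Finset.mem_sdiff.mpr ⟨Finset.mem_univ w, hwC⟩) hw hadj

-- connectivity of C together with all pieces except D₀

lemma glue_connected {C : Finset V} (hconn : H.Connected) (hCne : C.Nonempty)
    (hCconn : (H.induce (C : Set V)).Connected)
    {𝒟 : Finset (Finset V)}
    (h1 : ∀ D ∈ 𝒟, D.Nonempty ∧ D ⊆ univ \ C ∧ (H.induce (D : Set V)).Connected)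
    (h2 : ∀ D ∈ 𝒟, ∀ u ∈ D, ∀ w ∈ univ \ C, w ∉ D → ¬ H.Adj u w)
    (𝒟' : Finset (Finset V)) (h𝒟' : 𝒟' ⊆ 𝒟) :
    (H.induce ((C ∪ 𝒟'.biUnion id : Finset V) : Set V)).Connected := by
  obtain ⟨u0, hu0⟩ := hCne
  have hu0' : u0 ∈ ((C ∪ 𝒟'.biUnion id : Finset V) : Set V) := by
    simp only [Finset.coe_union, Set.mem_union, Finset.mem_coe]
    exact Or.inl hu0
  apply SimpleGraph.induce_connected_of_patches u0 hu0'
  intro v hv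
  simp only [Finset.coe_union, Set.mem_union, Finset.mem_coe, Finset.mem_biUnion] at hv
  rcases hv with hvC | hvD
  · refine ⟨(C : Set V), ?_, hu0, hvC, hCconn.preconnected _ _⟩
    intro x hx
    simp only [Finset.coe_union, Set.mem_union]
    exact Or.inl hx
  · obtain ⟨D, hD𝒟', hvD⟩ := hvD
    have hD := h𝒟' hD𝒟'
    obtain ⟨a, ha, b, hb, hadj⟩ := piece_adj_C H hconn ⟨u0, hu0⟩ h1 h2 hD
    refine ⟨(C : Set V) ∪ (D : Set V), ?_, Or.inl hu0, Or.inr hvD, ?_⟩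
    · intro x hx
      simp only [Finset.coe_union, Set.mem_union]
      rcases hx with hx | hx
      · exact Or.inl hx
      · exact Or.inr (Finset.mem_biUnion.mpr ⟨D, hD𝒟', hx⟩)
    · exact (SimpleGraph.connected_induce_union hCconn.preconnected (h1 D hD).2.2.preconnected hb ha
        hadj.symm).preconnected _ _


lemma nonempty_of_degSum_pos {B : Finset V} (h : 0 < degSum H B) : B.Nonempty := by
  rcases B.eq_empty_or_nonempty with rfl | h'
  · simp [degSum] at h
  · exact h'

lemma degSum_pos_of_nonempty (hdeg : ∀ v, 0 < H.degree v) {B : Finset V}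
    (h : B.Nonempty) : 0 < degSum H B :=
  Finset.sum_pos (fun v _ => hdeg v) h

theorem exists_admissible (hconn : H.Connected) (hne : H.edgeFinset.Nonempty)
    (B : Finset V) (hB1 : 0 < degSum H B) (hB2 : 2 * degSum H B ≤ degSum H univ) :
    ∃ A : Finset V, 0 < degSum H A ∧ 2 * degSum H A ≤ degSum H univ ∧
      (H.induce (A : Set V)).Connected ∧ (H.induce ((↑A : Set V)ᶜ)).Connected ∧
      bCount H A * degSum H B ≤ bCount H B * degSum H A := by
  have hdeg : ∀ v, 0 < H.degree v := degree_pos H hconn hne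
  have hT : 0 < degSum H univ := lt_of_lt_of_le hB1 (degSum_mono H (Finset.subset_univ B))
  have hBne : B.Nonempty := nonempty_of_degSum_pos H hB1
  -- Step 1: find connected C ⊆ B with ratio at most that of B
  obtain ⟨𝒟, h1, h2, h3, h4⟩ := exists_partition H B.card B le_rfl
  have h𝒟ne : 𝒟.Nonempty := by
    rcases 𝒟.eq_empty_or_nonempty with rfl | h'
    · rw [Finset.biUnion_empty] at h4; exact absurd h4 hBne.ne_empty
    · exact h'
  have hmed : ∃ C ∈ 𝒟, bCount H C * degSum H B ≤ bCount H B * degSum H C := by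
    by_contra hcon
    push_neg at hcon
    have hlt : ∑ D ∈ 𝒟, bCount H B * degSum H D < ∑ D ∈ 𝒟, bCount H D * degSum H B :=
      Finset.sum_lt_sum_of_nonempty h𝒟ne fun D hD => hcon D hD
    rw [← Finset.mul_sum, ← degSum_partition H h3 h4, ← Finset.sum_mul,
      ← bCount_partition H h1 h2 h3 h4] at hlt
    exact lt_irrefl _ hlt
  obtain ⟨C, hC𝒟, hCratio⟩ := hmed
  obtain ⟨hCne, hCB, hCconn⟩ := h1 C hC𝒟
  have hC1 : 0 < degSum H C := degSum_pos_of_nonempty H hdeg hCne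
  have hC2 : 2 * degSum H C ≤ degSum H univ :=
    le_trans (by have := degSum_mono H hCB; omega) hB2
  -- Step 2: complement analysis
  have hCuniv : C ≠ univ := by
    rintro rfl
    have := degSum_mono H hCB  -- univ ⊆ B means B = univ
    omega
  have hRne : (univ \ C).Nonempty := by
    rcases (univ \ C).eq_empty_or_nonempty with hE | h'
    · exfalso
      apply hCuniv
      have : univ ⊆ C := by
        intro x hx
        by_contra hxC
        exact Finset.notMem_empty x (hE ▸ Finset.mem_sdiff.mpr ⟨hx, hxC⟩)
      exact Finset.eq_univ_of_forall (fun x => this (Finset.mem_univ x))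
    · exact h'
  obtain ⟨𝒟', h1', h2', h3', h4'⟩ := exists_partition H (univ \ C).card (univ \ C) le_rfl
  have h𝒟'ne : 𝒟'.Nonempty := by
    rcases 𝒟'.eq_empty_or_nonempty with rfl | h'
    · rw [Finset.biUnion_empty] at h4'; exact absurd h4' hRne.ne_empty
    · exact h'
  have hbR : ∑ D ∈ 𝒟', bCount H D = bCount H C := by
    rw [← bCount_partition H h1' h2' h3' h4', bCount_compl H C]
  have hdR : ∑ D ∈ 𝒟', degSum H D = degSum H univ - degSum H C := by
    rw [← degSum_partition H h3' h4']
    have := degSum_sdiff_add H (Finset.subset_univ C)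
    omega
  have hbCpos : 0 < bCount H C := by
    obtain ⟨u, hu, w, hw, hadj⟩ := exists_boundary_edge H hconn hCne hCuniv
    exact bCount_pos H hu hw hadj
  -- finset identity : univ \ D = C ∪ (𝒟'.erase D).biUnion id, for D ∈ 𝒟'
  have hident : ∀ D ∈ 𝒟', univ \ D = C ∪ (𝒟'.erase D).biUnion id := by
    intro D hD
    ext v
    simp only [Finset.mem_sdiff, Finset.mem_univ, true_and, Finset.mem_union,
      Finset.mem_biUnion, Finset.mem_erase, id]
    constructor
    · intro hvD
      by_cases hvC : v ∈ C
      · exact Or.inl hvC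
      · have : v ∈ 𝒟'.biUnion id := h4' ▸ Finset.mem_sdiff.mpr ⟨Finset.mem_univ v, hvC⟩
        obtain ⟨D', hD', hvD'⟩ := Finset.mem_biUnion.mp this
        exact Or.inr ⟨D', ⟨fun h => hvD (h ▸ hvD'), hD'⟩, hvD'⟩
    · rintro (hvC | ⟨D', ⟨hne', hD'⟩, hvD'⟩)
      · intro hvD
        have := (h1' D hD).2.1 hvD
        rw [Finset.mem_sdiff] at this
        exact this.2 hvC
      · intro hvD
        have hdisj := h3' (by simpa using hD') (by simpa using hD) hne'
        exact Finset.disjoint_left.mp hdisj hvD' hvD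
  by_cases hbig : ∃ D ∈ 𝒟', degSum H univ < 2 * degSum H D
  · obtain ⟨D, hD, hDbig⟩ := hbig
    refine ⟨univ \ D, ?_, ?_, ?_, ?_, ?_⟩
    · have hCsub : C ⊆ univ \ D := by
        rw [hident D hD]; exact Finset.subset_union_left
      exact lt_of_lt_of_le hC1 (degSum_mono H hCsub)
    · have := degSum_sdiff_add H (Finset.subset_univ D)
      omega
    · rw [hident D hD]
      exact glue_connected H hconn hCne hCconn h1' h2' _ (Finset.erase_subset _ _)
    · have : ((↑(univ \ D) : Set V)ᶜ) = (D : Set V) := by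
        ext x; simp
      rw [this]
      exact (h1' D hD).2.2
    · have e1 : bCount H (univ \ D) = bCount H D := bCount_compl H D
      have e2 : bCount H D ≤ bCount H C := by
        rw [← hbR]
        exact Finset.single_le_sum (fun D' _ => Nat.zero_le _) hD
      have e3 : degSum H C ≤ degSum H (univ \ D) := by
        apply degSum_mono
        rw [hident D hD]; exact Finset.subset_union_left
      calc bCount H (univ \ D) * degSum H B ≤ bCount H C * degSum H B := by
            rw [e1]; exact Nat.mul_le_mul_right _ e2
        _ ≤ bCount H B * degSum H C := hCratio
        _ ≤ bCount H B * degSum H (univ \ D) := Nat.mul_le_mul_left _ e3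
  · push_neg at hbig
    have hmed2 : ∃ D ∈ 𝒟', bCount H D * degSum H C ≤ bCount H C * degSum H D := by
      by_contra hcon
      push_neg at hcon
      have hlt : ∑ D ∈ 𝒟', bCount H C * degSum H D < ∑ D ∈ 𝒟', bCount H D * degSum H C :=
        Finset.sum_lt_sum_of_nonempty h𝒟'ne fun D hD => hcon D hD
      rw [← Finset.mul_sum, hdR, ← Finset.sum_mul, hbR] at hlt
      -- bCount C * (T - dC) < bCount C * dC, but 2 dC ≤ T
      have : degSum H univ - degSum H C < degSum H C :=
        lt_of_mul_lt_mul_left hlt (Nat.zero_le _)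
      omega
    obtain ⟨D, hD, hDr⟩ := hmed2
    have hDne : D.Nonempty := (h1' D hD).1
    have hD1 : 0 < degSum H D := degSum_pos_of_nonempty H hdeg hDne
    refine ⟨D, hD1, hbig D hD, (h1' D hD).2.2, ?_, ?_⟩
    · have : ((↑D : Set V)ᶜ) = ((univ \ D : Finset V) : Set V) := by
        ext x; simp
      rw [this, hident D hD]
      exact glue_connected H hconn hCne hCconn h1' h2' _ (Finset.erase_subset _ _)
    · -- bCount D * degSum B ≤ bCount B * degSum D
      have key : bCount H D * degSum H B * degSum H C ≤ bCount H B * degSum H D * degSum H C := by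
        calc bCount H D * degSum H B * degSum H C
            = (bCount H D * degSum H C) * degSum H B := by ring
          _ ≤ (bCount H C * degSum H D) * degSum H B := Nat.mul_le_mul_right _ hDr
          _ = (bCount H C * degSum H B) * degSum H D := by ring
          _ ≤ (bCount H B * degSum H C) * degSum H D := Nat.mul_le_mul_right _ hCratio
          _ = bCount H B * degSum H D * degSum H C := by ring
      exact Nat.le_of_mul_le_mul_right key hC1


lemma isoSet_bddBelow : BddBelow {x : ℝ | ∃ A : Finset V, 0 < degSum H A ∧
    2 * degSum H A ≤ degSum H Finset.univ ∧
    (H.induce (A : Set V)).Connected ∧ (H.induce ((↑A : Set V)ᶜ)).Connected ∧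
    x = iH H A} := by
  refine ⟨0, fun x hx => ?_⟩
  obtain ⟨A, _, _, _, _, rfl⟩ := hx
  exact div_nonneg (Nat.cast_nonneg _) (Nat.cast_nonneg _)

lemma isoC_le_iH (hconn : H.Connected) (hne : H.edgeFinset.Nonempty)
    {B : Finset V} (hB1 : 0 < degSum H B) (hB2 : 2 * degSum H B ≤ degSum H univ) :
    isoC H ≤ iH H B := by
  obtain ⟨A, hA1, hA2, hA3, hA4, hAB⟩ := exists_admissible H hconn hne B hB1 hB2
  have h1 : isoC H ≤ iH H A :=
    csInf_le (isoSet_bddBelow H) ⟨A, hA1, hA2, hA3, hA4, rfl⟩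
  refine h1.trans ?_
  rw [iH, iH, div_le_div_iff₀ (by exact_mod_cast hA1) (by exact_mod_cast hB1)]
  exact_mod_cast Nat.mul_le_mul_left 1 hAB |>.trans_eq (by ring) |>.trans_eq' (by ring)

lemma isoC_mul_le (hconn : H.Connected) (hne : H.edgeFinset.Nonempty)
    {B : Finset V} (hB1 : 0 < degSum H B) (hB2 : 2 * degSum H B ≤ degSum H univ) :
    isoC H * (degSum H B : ℝ) ≤ (bCount H B : ℝ) := by
  have := isoC_le_iH H hconn hne hB1 hB2
  rw [iH, le_div_iff₀ (by exact_mod_cast hB1)] at this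
  exact this

lemma isoC_pos (hconn : H.Connected) (hne : H.edgeFinset.Nonempty) : 0 < isoC H := by
  have hT : 0 < degSum H univ := by
    obtain ⟨e, he⟩ := id hne
    rw [SimpleGraph.mem_edgeFinset] at he
    induction e with
    | h a b =>
      have : 0 < H.degree a := by
        rw [H.degree_pos_iff_exists_adj]; exact ⟨b, he⟩
      refine lt_of_lt_of_le this ?_
      exact Finset.single_le_sum (f := fun v => H.degree v) (fun v _ => Nat.zero_le _)
        (Finset.mem_univ a)
  -- build a starting B
  have hstart : ∃ B : Finset V, 0 < degSum H B ∧ 2 * degSum H B ≤ degSum H univ := by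
    obtain ⟨e, he⟩ := id hne
    rw [SimpleGraph.mem_edgeFinset] at he
    induction e with
    | h a b =>
      have hab : a ≠ b := (H.ne_of_adj he)
      obtain ⟨v0, _, hv0⟩ := Finset.exists_min_image univ (fun v => H.degree v) ⟨a, Finset.mem_univ a⟩
      refine ⟨{v0}, ?_, ?_⟩
      · have : 0 < H.degree v0 := degree_pos H hconn hne v0
        simpa [degSum] using this
      · have h2 : degSum H {a, b} ≤ degSum H univ := degSum_mono H (Finset.subset_univ _)
        have h3 : degSum H {a, b} = H.degree a + H.degree b := by
          rw [degSum, Finset.sum_pair hab]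
        have h4 : H.degree v0 ≤ H.degree a := hv0 a (Finset.mem_univ a)
        have h5 : H.degree v0 ≤ H.degree b := hv0 b (Finset.mem_univ b)
        have h6 : degSum H {v0} = H.degree v0 := by simp [degSum]
        omega
  obtain ⟨B, hB1, hB2⟩ := hstart
  obtain ⟨A, hA1, hA2, hA3, hA4, _⟩ := exists_admissible H hconn hne B hB1 hB2
  set S := {x : ℝ | ∃ A : Finset V, 0 < degSum H A ∧
    2 * degSum H A ≤ degSum H Finset.univ ∧
    (H.induce (A : Set V)).Connected ∧ (H.induce ((↑A : Set V)ᶜ)).Connected ∧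
    x = iH H A} with hS
  have hSne : S.Nonempty := ⟨iH H A, A, hA1, hA2, hA3, hA4, rfl⟩
  have hSfin : S.Finite := by
    apply Set.Finite.subset (Set.finite_range (iH H))
    rintro x ⟨A', _, _, _, _, rfl⟩
    exact ⟨A', rfl⟩
  have hmem : isoC H ∈ S := hSne.csInf_mem hSfin
  obtain ⟨A0, hA01, hA02, _, _, hEq⟩ := hmem
  rw [hEq, iH]
  apply div_pos ?_ (by exact_mod_cast hA01)
  have hA0ne : A0.Nonempty := nonempty_of_degSum_pos H hA01
  have hA0univ : A0 ≠ univ := by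
    rintro rfl
    omega
  obtain ⟨u, hu, w, hw, hadj⟩ := exists_boundary_edge H hconn hA0ne hA0univ
  exact_mod_cast bCount_pos H hu hw hadj


lemma exists_median (f : V → ℝ) :
    ∃ m : ℝ, 2 * degSum H (univ.filter fun v => m < f v) ≤ degSum H univ ∧
      2 * degSum H (univ.filter fun v => f v < m) ≤ degSum H univ := by
  rcases isEmpty_or_nonempty V with hV | hV
  · exact ⟨0, by simp [degSum], by simp [degSum]⟩
  set T := degSum H univ with hT
  set Vals := univ.image f with hVals
  have hValsne : Vals.Nonempty := (Finset.univ_nonempty).image f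
  set Good := Vals.filter (fun x => T ≤ 2 * degSum H (univ.filter fun v => f v ≤ x))
    with hGood
  have hGoodne : Good.Nonempty := by
    refine ⟨Vals.max' hValsne, Finset.mem_filter.mpr ⟨Vals.max'_mem hValsne, ?_⟩⟩
    have : univ.filter (fun v => f v ≤ Vals.max' hValsne) = univ := by
      refine Finset.filter_true_of_mem fun v _ => ?_
      exact Vals.le_max' (f v) (Finset.mem_image_of_mem f (Finset.mem_univ v))
    rw [this]
    omega
  set m := Good.min' hGoodne with hm
  have hmGood : T ≤ 2 * degSum H (univ.filter fun v => f v ≤ m) :=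
    (Finset.mem_filter.mp (Finset.min'_mem Good hGoodne)).2
  refine ⟨m, ?_, ?_⟩
  · have hsplit : degSum H (univ.filter fun v => m < f v) +
        degSum H (univ.filter fun v => f v ≤ m) = T := by
      have h1 : univ.filter (fun v => m < f v) = univ \ univ.filter (fun v => f v ≤ m) := by
        ext v; simp [not_le]
      rw [h1, hT]
      exact degSum_sdiff_add H (Finset.filter_subset _ _)
    omega
  · set W := univ.filter (fun v => f v < m) with hW
    rcases W.eq_empty_or_nonempty with hWe | hWne
    · rw [hWe]; simp [degSum]
    · have hWim : (W.image f).Nonempty := hWne.image f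
      set m' := (W.image f).max' hWim with hm'
      obtain ⟨v', hv'W, hv'0⟩ := Finset.mem_image.mp ((W.image f).max'_mem hWim)
      have hv' : f v' = m' := hv'0
      have hm'lt : m' < m := by
        rw [← hv']
        exact (Finset.mem_filter.mp hv'W).2
      have hWeq : univ.filter (fun v => f v ≤ m') = W := by
        ext v
        simp only [hW, Finset.mem_filter, Finset.mem_univ, true_and]
        constructor
        · intro h; exact lt_of_le_of_lt h hm'lt
        · intro h
          exact (W.image f).le_max' (f v)
            (Finset.mem_image_of_mem f (Finset.mem_filter.mpr ⟨Finset.mem_univ v, h⟩))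
      have hm'Vals : m' ∈ Vals := by
        rw [← hv']
        exact Finset.mem_image_of_mem f (Finset.mem_univ v')
      have hm'notGood : m' ∉ Good := fun hmem => absurd (Good.min'_le m' hmem) (by
        rw [← hm]; exact not_le.mpr hm'lt)
      have : ¬ (T ≤ 2 * degSum H (univ.filter fun v => f v ≤ m')) := by
        intro h
        exact hm'notGood (Finset.mem_filter.mpr ⟨hm'Vals, h⟩)
      rw [hWeq] at this
      omega

lemma fbar_min (f : V → ℝ) (m : ℝ) (hT : 0 < degSum H univ) :
    ∑ v : V, (f v - fbar H f)^2 * (H.degree v : ℝ) ≤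
      ∑ v : V, (f v - m)^2 * (H.degree v : ℝ) := by
  have hTR : (0:ℝ) < (degSum H univ : ℝ) := by exact_mod_cast hT
  have hdeg : (degSum H univ : ℝ) = ∑ v : V, (H.degree v : ℝ) := by
    rw [degSum]; push_cast; rfl
  have h0 : ∑ v : V, (f v - fbar H f) * (H.degree v : ℝ) = 0 := by
    have : ∑ v : V, (f v - fbar H f) * (H.degree v : ℝ)
        = (∑ v : V, f v * (H.degree v : ℝ)) - fbar H f * (degSum H univ : ℝ) := by
      rw [hdeg, Finset.mul_sum, ← Finset.sum_sub_distrib]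
      exact Finset.sum_congr rfl fun v _ => by ring
    rw [this, fbar, div_mul_cancel₀ _ (ne_of_gt hTR), sub_self]
  have hexp : ∀ v : V, (f v - m)^2 * (H.degree v : ℝ)
      = (f v - fbar H f)^2 * (H.degree v : ℝ)
        + (2 * (fbar H f - m)) * ((f v - fbar H f) * (H.degree v : ℝ))
        + (fbar H f - m)^2 * (H.degree v : ℝ) := fun v => by ring
  rw [Finset.sum_congr rfl fun v _ => hexp v]
  rw [Finset.sum_add_distrib, Finset.sum_add_distrib, ← Finset.mul_sum, h0, mul_zero,
    add_zero, ← Finset.mul_sum, ← hdeg]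
  nlinarith [sq_nonneg (fbar H f - m), hTR.le, mul_nonneg (sq_nonneg (fbar H f - m)) hTR.le]


lemma coarea_aux (hconn : H.Connected) (hne : H.edgeFinset.Nonempty) :
    ∀ (n : ℕ) (u : V → ℝ), (∀ v, 0 ≤ u v) →
    (univ.filter fun v => 0 < u v).card ≤ n →
    2 * degSum H (univ.filter fun v => 0 < u v) ≤ degSum H univ →
    isoC H * ∑ v, u v * (H.degree v : ℝ) ≤
      (1/2) * ∑ v, ∑ w ∈ H.neighborFinset v, |u v - u w| := by
  intro n
  induction n with
  | zero =>
    intro u hu hcard _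
    have hS : (univ.filter fun v => 0 < u v) = ∅ := Finset.card_eq_zero.mp
      (Nat.le_zero.mp hcard)
    have hzero : ∀ v, u v = 0 := by
      intro v
      by_contra h
      have : 0 < u v := lt_of_le_of_ne (hu v) (Ne.symm h)
      exact Finset.notMem_empty v (hS ▸ Finset.mem_filter.mpr ⟨Finset.mem_univ v, this⟩)
    simp [hzero]
  | succ n ih =>
    intro u hu hcard hhalf
    set S := univ.filter (fun v => 0 < u v) with hSdef
    rcases S.eq_empty_or_nonempty with hSe | hSne
    · -- same as base case
      have hzero : ∀ v, u v = 0 := by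
        intro v
        by_contra h
        have : 0 < u v := lt_of_le_of_ne (hu v) (Ne.symm h)
        exact Finset.notMem_empty v (hSe ▸ Finset.mem_filter.mpr ⟨Finset.mem_univ v, this⟩)
      simp [hzero]
    · obtain ⟨v0, hv0S, hmin⟩ := Finset.exists_min_image S u hSne
      set t0 := u v0 with ht0
      have ht0pos : 0 < t0 := (Finset.mem_filter.mp hv0S).2
      set u' := fun v => max (u v - t0) 0 with hu'def
      have hu' : ∀ v, 0 ≤ u' v := fun v => le_max_right _ _
      have huS : ∀ v ∈ S, u v = u' v + t0 := by
        intro v hv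
        have := hmin v hv
        simp only [hu'def]
        rw [max_eq_left (by linarith)]
        ring
      have huNS : ∀ v, v ∉ S → u v = 0 ∧ u' v = 0 := by
        intro v hv
        have h1 : u v = 0 := by
          by_contra h
          exact hv (Finset.mem_filter.mpr ⟨Finset.mem_univ v,
            lt_of_le_of_ne (hu v) (Ne.symm h)⟩)
        refine ⟨h1, ?_⟩
        simp only [hu'def, h1]
        rw [max_eq_right (by linarith)]
      -- support of u'
      have hsub : (univ.filter fun v => 0 < u' v) ⊆ S.erase v0 := by
        intro v hv
        have hv' : 0 < u' v := (Finset.mem_filter.mp hv).2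
        have hvt : t0 < u v := by
          by_contra h
          push_neg at h
          simp only [hu'def] at hv'
          rw [max_eq_right (by linarith)] at hv'
          exact lt_irrefl 0 hv'
        refine Finset.mem_erase.mpr ⟨?_, Finset.mem_filter.mpr ⟨Finset.mem_univ v,
          lt_trans ht0pos hvt⟩⟩
        rintro rfl
        exact lt_irrefl _ (ht0 ▸ hvt)
      have hcard' : (univ.filter fun v => 0 < u' v).card ≤ n := by
        have h1 : (S.erase v0).card < S.card := Finset.card_erase_lt_of_mem hv0S
        have h2 := Finset.card_le_card hsub
        omega
      have hhalf' : 2 * degSum H (univ.filter fun v => 0 < u' v) ≤ degSum H univ := by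
        have := degSum_mono H (hsub.trans (Finset.erase_subset _ _))
        omega
      have IH := ih u' hu' hcard' hhalf'
      -- degree sum decomposition
      have hsum : ∑ v, u v * (H.degree v : ℝ)
          = (∑ v, u' v * (H.degree v : ℝ)) + t0 * (degSum H S : ℝ) := by
        have : ∀ v, u v * (H.degree v : ℝ) = u' v * (H.degree v : ℝ)
            + (if v ∈ S then t0 * (H.degree v : ℝ) else 0) := by
          intro v
          by_cases hv : v ∈ S
          · rw [huS v hv, if_pos hv]; ring
          · rw [(huNS v hv).1, (huNS v hv).2, if_neg hv]; ring
        rw [Finset.sum_congr rfl fun v _ => this v, Finset.sum_add_distrib]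
        congr 1
        rw [Finset.sum_ite_mem, Finset.univ_inter, degSum]
        push_cast
        rw [Finset.mul_sum]
      -- edge decomposition
      have hedge : ∀ v w, |u v - u w| = |u' v - u' w|
          + ((if v ∈ S ∧ w ∉ S then t0 else 0) + (if w ∈ S ∧ v ∉ S then t0 else 0)) := by
        intro v w
        by_cases hv : v ∈ S <;> by_cases hw : w ∈ S
        · rw [huS v hv, huS w hw]
          have he : u' v + t0 - (u' w + t0) = u' v - u' w := by ring
          rw [he]
          simp [hv, hw]
        · rw [huS v hv, (huNS w hw).1, (huNS w hw).2]
          simp only [hv, hw, true_and, and_true, not_false_iff, if_pos, not_true,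
            false_and, if_neg]
          rw [sub_zero, sub_zero, abs_of_nonneg (by positivity),
            abs_of_nonneg (hu' v)]
          ring
        · rw [(huNS v hv).1, (huNS v hv).2, huS w hw]
          simp only [hv, hw, true_and, and_true, not_false_iff, if_pos, not_true,
            false_and, if_neg, and_false]
          rw [zero_sub, zero_sub, abs_neg, abs_neg, abs_of_nonneg (by positivity),
            abs_of_nonneg (hu' w)]
          ring
        · rw [(huNS v hv).1, (huNS v hv).2, (huNS w hw).1, (huNS w hw).2]
          simp [hv, hw]
      have hedgesum : ∑ v, ∑ w ∈ H.neighborFinset v, |u v - u w|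
          = (∑ v, ∑ w ∈ H.neighborFinset v, |u' v - u' w|)
            + 2 * (t0 * (bCount H S : ℝ)) := by
        rw [Finset.sum_congr rfl fun v _ => Finset.sum_congr rfl fun w _ => hedge v w]
        rw [Finset.sum_congr rfl fun v (_ : v ∈ univ) => Finset.sum_add_distrib,
          Finset.sum_add_distrib]
        congr 1
        rw [Finset.sum_congr rfl fun v (_ : v ∈ univ) => Finset.sum_add_distrib,
          Finset.sum_add_distrib]
        have e1 : ∑ v, ∑ w ∈ H.neighborFinset v, (if v ∈ S ∧ w ∉ S then t0 else 0)
            = t0 * (bCount H S : ℝ) := by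
          rw [bCount_eq_indicator H S, Finset.mul_sum]
          refine Finset.sum_congr rfl fun v _ => ?_
          rw [Finset.mul_sum]
          refine Finset.sum_congr rfl fun w _ => ?_
          split <;> simp
        have e2 : ∑ v, ∑ w ∈ H.neighborFinset v, (if w ∈ S ∧ v ∉ S then t0 else 0)
            = t0 * (bCount H S : ℝ) := by
          rw [sum_swap_nbhd H (fun v w => if w ∈ S ∧ v ∉ S then t0 else 0)]
          rw [bCount_eq_indicator H S, Finset.mul_sum]
          refine Finset.sum_congr rfl fun v _ => ?_
          rw [Finset.mul_sum]
          refine Finset.sum_congr rfl fun w _ => ?_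
          split <;> simp
        rw [e1, e2]
        ring
      -- isoperimetric bound for S
      have hSpos : 0 < degSum H S :=
        degSum_pos_of_nonempty H (degree_pos H hconn hne) hSne
      have hiso : isoC H * (degSum H S : ℝ) ≤ (bCount H S : ℝ) :=
        isoC_mul_le H hconn hne hSpos hhalf
      calc isoC H * ∑ v, u v * (H.degree v : ℝ)
          = isoC H * ∑ v, u' v * (H.degree v : ℝ)
            + t0 * (isoC H * (degSum H S : ℝ)) := by rw [hsum]; ring
        _ ≤ (1/2) * ∑ v, ∑ w ∈ H.neighborFinset v, |u' v - u' w|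
            + t0 * (bCount H S : ℝ) := by
            refine add_le_add IH ?_
            exact mul_le_mul_of_nonneg_left hiso ht0pos.le
        _ = (1/2) * ∑ v, ∑ w ∈ H.neighborFinset v, |u v - u w| := by
            rw [hedgesum]; ring


lemma ptwise1 (a b : ℝ) :
    (max a 0 - max b 0)^2 + (max (-a) 0 - max (-b) 0)^2 ≤ (a - b)^2 := by
  rcases le_total a 0 with ha | ha <;> rcases le_total b 0 with hb | hb
  · rw [max_eq_right ha, max_eq_right hb, max_eq_left (by linarith),
      max_eq_left (by linarith)]
    nlinarith
  · rw [max_eq_right ha, max_eq_left hb, max_eq_left (by linarith),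
      max_eq_right (by linarith)]
    nlinarith [mul_nonpos_of_nonpos_of_nonneg ha hb]
  · rw [max_eq_left ha, max_eq_right hb, max_eq_right (by linarith),
      max_eq_left (by linarith)]
    nlinarith [mul_nonpos_of_nonneg_of_nonpos ha hb]
  · rw [max_eq_left ha, max_eq_left hb, max_eq_right (by linarith),
      max_eq_right (by linarith)]
    nlinarith

lemma ptwise2 (a : ℝ) : a^2 = (max a 0)^2 + (max (-a) 0)^2 := by
  rcases le_total a 0 with ha | ha
  · rw [max_eq_right ha, max_eq_left (by linarith)]; ring
  · rw [max_eq_left ha, max_eq_right (by linarith)]; ring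

-- Cheeger inequality for a nonnegative function supported on at most half the graph

lemma cheeger_half (hconn : H.Connected) (hne : H.edgeFinset.Nonempty)
    (g : V → ℝ) (hg : ∀ v, 0 ≤ g v)
    (hsupp : 2 * degSum H (univ.filter fun v => 0 < g v) ≤ degSum H univ) :
    (isoC H)^2 * ∑ v, (g v)^2 * (H.degree v : ℝ) ≤
      ∑ v, ∑ w ∈ H.neighborFinset v, (g v - g w)^2 := by
  set P := ∑ v, (g v)^2 * (H.degree v : ℝ) with hP
  set D2 := ∑ v, ∑ w ∈ H.neighborFinset v, (g v - g w)^2 with hD2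
  set A := ∑ v, ∑ w ∈ H.neighborFinset v, |(g v)^2 - (g w)^2| with hA
  have hPnonneg : 0 ≤ P :=
    Finset.sum_nonneg fun v _ => mul_nonneg (sq_nonneg _) (Nat.cast_nonneg _)
  have hD2nonneg : 0 ≤ D2 :=
    Finset.sum_nonneg fun v _ => Finset.sum_nonneg fun w _ => sq_nonneg _
  have hiso := isoC_pos H hconn hne
  -- coarea
  have hco : isoC H * P ≤ (1/2) * A := by
    have hfilter : (univ.filter fun v => 0 < (g v)^2) = (univ.filter fun v => 0 < g v) := by
      refine Finset.filter_congr fun v _ => ?_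
      constructor
      · intro h
        rcases lt_or_eq_of_le (hg v) with h' | h'
        · exact h'
        · exfalso; rw [← h'] at h; simp at h
      · intro h; positivity
    exact coarea_aux H hconn hne (univ.filter fun v => 0 < (g v)^2).card
      (fun v => (g v)^2) (fun v => sq_nonneg _) le_rfl (by rw [hfilter]; exact hsupp)
  -- bound the (g v + g w)^2 sum
  have e1 : ∑ v, ∑ w ∈ H.neighborFinset v, (g v)^2 = P := by
    refine Finset.sum_congr rfl fun v _ => ?_
    rw [Finset.sum_const, H.card_neighborFinset_eq_degree, nsmul_eq_mul, mul_comm]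
  have e2 : ∑ v, ∑ w ∈ H.neighborFinset v, (g w)^2 = P := by
    rw [sum_swap_nbhd H (fun v w => (g w)^2)]
    exact e1
  have hQ : ∑ v, ∑ w ∈ H.neighborFinset v, (g v + g w)^2 ≤ 4 * P := by
    have step : ∑ v, ∑ w ∈ H.neighborFinset v, (g v + g w)^2
        ≤ ∑ v, ∑ w ∈ H.neighborFinset v, (2 * (g v)^2 + 2 * (g w)^2) := by
      refine Finset.sum_le_sum fun v _ => Finset.sum_le_sum fun w _ => ?_
      nlinarith [sq_nonneg (g v - g w)]
    refine step.trans ?_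
    have expand : ∑ v, ∑ w ∈ H.neighborFinset v, (2 * (g v)^2 + 2 * (g w)^2)
        = 2 * (∑ v, ∑ w ∈ H.neighborFinset v, (g v)^2)
          + 2 * (∑ v, ∑ w ∈ H.neighborFinset v, (g w)^2) := by
      rw [Finset.mul_sum, Finset.mul_sum, ← Finset.sum_add_distrib]
      refine Finset.sum_congr rfl fun v _ => ?_
      rw [Finset.mul_sum, Finset.mul_sum, ← Finset.sum_add_distrib]
    rw [expand, e1, e2]
    ring_nf
    exact le_refl _
  -- Cauchy-Schwarz on the sigma type
  have hCS : A^2 ≤ D2 * (4 * P) := by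
    have hrw : A = ∑ p ∈ univ.sigma (fun v : V => H.neighborFinset v),
        (|g p.1 - g p.2| * |g p.1 + g p.2|) := by
      rw [Finset.sum_sigma]
      refine Finset.sum_congr rfl fun v _ => Finset.sum_congr rfl fun w _ => ?_
      rw [← abs_mul]
      congr 1
      ring
    have hcs := Finset.sum_mul_sq_le_sq_mul_sq
      (univ.sigma (fun v : V => H.neighborFinset v))
      (fun p => |g p.1 - g p.2|) (fun p => |g p.1 + g p.2|)
    rw [← hrw] at hcs
    have hd : ∑ p ∈ univ.sigma (fun v : V => H.neighborFinset v),
        |g p.1 - g p.2|^2 = D2 := by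
      rw [Finset.sum_sigma]
      exact Finset.sum_congr rfl fun v _ => Finset.sum_congr rfl fun w _ => sq_abs _
    have hq : ∑ p ∈ univ.sigma (fun v : V => H.neighborFinset v),
        |g p.1 + g p.2|^2 ≤ 4 * P := by
      rw [Finset.sum_sigma]
      calc ∑ v, ∑ w ∈ H.neighborFinset v, |g v + g w|^2
          = ∑ v, ∑ w ∈ H.neighborFinset v, (g v + g w)^2 :=
            Finset.sum_congr rfl fun v _ => Finset.sum_congr rfl fun w _ => sq_abs _
        _ ≤ 4 * P := hQ
    calc A^2 ≤ (∑ p ∈ univ.sigma (fun v : V => H.neighborFinset v), |g p.1 - g p.2|^2)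
          * ∑ p ∈ univ.sigma (fun v : V => H.neighborFinset v), |g p.1 + g p.2|^2 := hcs
      _ ≤ D2 * (4 * P) := by
          rw [hd]
          exact mul_le_mul_of_nonneg_left hq hD2nonneg
  -- combine
  rcases eq_or_lt_of_le hPnonneg with hP0 | hPpos
  · rw [← hP0, mul_zero]
    exact hD2nonneg
  · have hAnonneg : 0 ≤ A :=
      Finset.sum_nonneg fun v _ => Finset.sum_nonneg fun w _ => abs_nonneg _
    have h2 : (2 * (isoC H * P))^2 ≤ A^2 := by
      have hle : 2 * (isoC H * P) ≤ A := by linarith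
      have hnn : 0 ≤ 2 * (isoC H * P) := by positivity
      exact pow_le_pow_left₀ hnn hle 2
    have h3 : 4 * ((isoC H)^2 * P^2) ≤ D2 * (4 * P) := by
      calc 4 * ((isoC H)^2 * P^2) = (2 * (isoC H * P))^2 := by ring
        _ ≤ A^2 := h2
        _ ≤ D2 * (4 * P) := hCS
    have h4 : ((isoC H)^2 * P) * P ≤ D2 * P := by nlinarith
    exact le_of_mul_le_mul_right h4 hPpos

theorem main_ineq (hconn : H.Connected) (hne : H.edgeFinset.Nonempty) (f : V → ℝ) :
    (∑ v : V, (f v - fbar H f)^2 * (H.degree v : ℝ))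
      ≤ (2 / (isoC H)^2) * ∑ e ∈ H.edgeFinset, gradSq f e := by
  obtain ⟨m, hm1, hm2⟩ := exists_median H f
  set gp := fun v => max (f v - m) 0 with hgp
  set gm := fun v => max (m - f v) 0 with hgm
  have hgpnn : ∀ v, 0 ≤ gp v := fun v => le_max_right _ _
  have hgmnn : ∀ v, 0 ≤ gm v := fun v => le_max_right _ _
  have hfp : (univ.filter fun v => 0 < gp v) = (univ.filter fun v => m < f v) := by
    refine Finset.filter_congr fun v _ => ?_
    rw [hgp]
    simp only [lt_max_iff, lt_irrefl, or_false, sub_pos]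
  have hfm : (univ.filter fun v => 0 < gm v) = (univ.filter fun v => f v < m) := by
    refine Finset.filter_congr fun v _ => ?_
    rw [hgm]
    simp only [lt_max_iff, lt_irrefl, or_false, sub_pos]
  have h1 := cheeger_half H hconn hne gp hgpnn (by rw [hfp]; exact hm1)
  have h2 := cheeger_half H hconn hne gm hgmnn (by rw [hfm]; exact hm2)
  have hiso := isoC_pos H hconn hne
  -- pointwise square decomposition
  have hpt : ∀ v, (f v - m)^2 = (gp v)^2 + (gm v)^2 := by
    intro v
    have := ptwise2 (f v - m)
    rwa [neg_sub] at this
  -- edge bound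
  have hedge : ∀ v w, (gp v - gp w)^2 + (gm v - gm w)^2 ≤ (f v - f w)^2 := by
    intro v w
    have := ptwise1 (f v - m) (f w - m)
    rw [neg_sub, neg_sub] at this
    calc (gp v - gp w)^2 + (gm v - gm w)^2
        ≤ ((f v - m) - (f w - m))^2 := this
      _ = (f v - f w)^2 := by ring
  -- the total Dirichlet energy
  have hpair : ∑ v, ∑ w ∈ H.neighborFinset v, (f v - f w)^2
      = 2 * ∑ e ∈ H.edgeFinset, gradSq f e := by
    rw [← pair_sum_eq H (gradSq f)]
    refine Finset.sum_congr rfl fun v _ => Finset.sum_congr rfl fun w _ => ?_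
    rw [gradSq, Sym2.lift_mk]
    ring
  have hsumedge : (∑ v, ∑ w ∈ H.neighborFinset v, (gp v - gp w)^2)
      + (∑ v, ∑ w ∈ H.neighborFinset v, (gm v - gm w)^2)
      ≤ 2 * ∑ e ∈ H.edgeFinset, gradSq f e := by
    rw [← hpair]
    rw [← Finset.sum_add_distrib]
    refine Finset.sum_le_sum fun v _ => ?_
    rw [← Finset.sum_add_distrib]
    exact Finset.sum_le_sum fun w _ => hedge v w
  have hT : 0 < degSum H univ := degSum_univ_pos H hconn hne
  have hstep1 : (∑ v : V, (f v - fbar H f)^2 * (H.degree v : ℝ))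
      ≤ (∑ v, (gp v)^2 * (H.degree v : ℝ)) + (∑ v, (gm v)^2 * (H.degree v : ℝ)) := by
    refine (fbar_min H f m hT).trans ?_
    rw [← Finset.sum_add_distrib]
    refine le_of_eq (Finset.sum_congr rfl fun v _ => ?_)
    rw [hpt v]
    ring
  have hstep2 : (isoC H)^2 * ((∑ v, (gp v)^2 * (H.degree v : ℝ))
      + (∑ v, (gm v)^2 * (H.degree v : ℝ)))
      ≤ 2 * ∑ e ∈ H.edgeFinset, gradSq f e := by
    calc (isoC H)^2 * ((∑ v, (gp v)^2 * (H.degree v : ℝ))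
        + (∑ v, (gm v)^2 * (H.degree v : ℝ)))
        = (isoC H)^2 * (∑ v, (gp v)^2 * (H.degree v : ℝ))
          + (isoC H)^2 * (∑ v, (gm v)^2 * (H.degree v : ℝ)) := by ring
      _ ≤ (∑ v, ∑ w ∈ H.neighborFinset v, (gp v - gp w)^2)
          + (∑ v, ∑ w ∈ H.neighborFinset v, (gm v - gm w)^2) := add_le_add h1 h2
      _ ≤ 2 * ∑ e ∈ H.edgeFinset, gradSq f e := hsumedge
  have hsq : (0:ℝ) < (isoC H)^2 := by positivity
  rw [div_mul_eq_mul_div, le_div_iff₀ hsq]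
  calc (∑ v : V, (f v - fbar H f)^2 * (H.degree v : ℝ)) * (isoC H)^2
      ≤ ((∑ v, (gp v)^2 * (H.degree v : ℝ))
        + (∑ v, (gm v)^2 * (H.degree v : ℝ))) * (isoC H)^2 :=
        mul_le_mul_of_nonneg_right hstep1 hsq.le
    _ = (isoC H)^2 * ((∑ v, (gp v)^2 * (H.degree v : ℝ))
        + (∑ v, (gm v)^2 * (H.degree v : ℝ))) := by ring
    _ ≤ 2 * ∑ e ∈ H.edgeFinset, gradSq f e := hstep2


end Aux

/-- Lemma 2.4 of the paper, after Barlow: a universal constant `c > 0`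
such that every finite connected graph `H` with at least one edge satisfies the Poincaré
inequality with constant `c / I_H²`. -/
theorem statement_0 :
    ∃ c : ℝ, 0 < c ∧
      ∀ (V : Type) (_ : Fintype V) (_ : DecidableEq V)
        (H : SimpleGraph V) (_ : DecidableRel H.Adj),
        H.Connected → H.edgeFinset.Nonempty →
        ∀ f : V → ℝ,
          (∑ v : V, (f v - fbar H f)^2 * (H.degree v : ℝ))
            ≤ (c / (isoC H)^2) * ∑ e ∈ H.edgeFinset, gradSq f e := by
  refine ⟨2, by norm_num, ?_⟩
  intro V iV dV H dR hconn hne f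
  letI := iV; letI := dV; letI := dR
  exact main_ineq H hconn hne f


end RSW
end
end

section
/- Let Π ⊂ ℝ² be locally finite, let s, A > 0, and let x, y ∈ sℤ² be adjacent (|x − y| = s). Suppose Λ_s(x) and Λ_s(y) are both A-red, and set ℛ = Λ_s(x) ∪ Λ_s(y). Let Q₁ and Q₂ be two of the s/10-subsquares of ℛ each lying at Euclidean distance at least s/4 from the boundary of ℛ. Then for any points u ∈ Π ∩ Q₁ and v ∈ Π ∩ Q₂ (which exist since the boxes are red), there exists a path in the Delaunay graph 𝕋 from u to v with at most 800 A s² vertices, all of whose vertices and straight-line edges lie inside ℛ. -/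
open scoped BigOperators
open scoped Classical

noncomputable section

namespace Delaunay

/-- Euclidean distance on `ℝ²`. -/
def eDist (p q : ℝ × ℝ) : ℝ := Real.sqrt ((p.1 - q.1)^2 + (p.2 - q.2)^2)

/-- Euclidean distance from a point to a set. -/
def distToSet (p : ℝ × ℝ) (S : Set (ℝ × ℝ)) : ℝ := sInf (eDist p '' S)

/-- A subset of the plane is locally finite if it has finitely many points in every
bounded region. -/
def LocFin (P : Set (ℝ × ℝ)) : Prop :=
  ∀ R : ℝ, (P ∩ {q | eDist (0, 0) q ≤ R}).Finite

/-- The Voronoi cell of `x ∈ P`. -/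
def vorCell (P : Set (ℝ × ℝ)) (x : ℝ × ℝ) : Set (ℝ × ℝ) :=
  {p | ∀ y ∈ P, eDist p x ≤ eDist p y}

/-- The Voronoi (Delaunay) triangulation of `P`: `x` and `y` are adjacent iff their
Voronoi cells share a common boundary edge, i.e. the set of points equidistant from
`x` and `y` at distance `dist(·, P)` contains more than one point. -/
def delaunay (P : Set (ℝ × ℝ)) : SimpleGraph (ℝ × ℝ) where
  Adj x y := x ≠ y ∧ x ∈ P ∧ y ∈ P ∧
    Set.Nontrivial {p : ℝ × ℝ | eDist p x = eDist p y ∧ eDist p x = distToSet p P}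
  symm := ⟨by
    rintro x y ⟨hne, hx, hy, p, hp, q, hq, hpq⟩
    exact ⟨hne.symm, hy, hx, p, ⟨hp.1.symm, hp.1.symm.trans hp.2⟩,
      q, ⟨hq.1.symm, hq.1.symm.trans hq.2⟩, hpq⟩⟩
  loopless := ⟨fun x h => h.1 rfl⟩

/-- The square `z + [-a,a]²`. -/
def square (z : ℝ × ℝ) (a : ℝ) : Set (ℝ × ℝ) :=
  {p | |p.1 - z.1| ≤ a ∧ |p.2 - z.2| ≤ a}

/-- The `(i,j)`-th of the 400 congruent subsquares of side `s/10` of `Λ_s(x)`. -/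
def subsq (x : ℝ × ℝ) (s : ℝ) (i j : Fin 20) : Set (ℝ × ℝ) :=
  {p | x.1 - s + (i : ℕ) * (s/10) ≤ p.1 ∧ p.1 ≤ x.1 - s + ((i : ℕ) + 1) * (s/10) ∧
       x.2 - s + (j : ℕ) * (s/10) ≤ p.2 ∧ p.2 ≤ x.2 - s + ((j : ℕ) + 1) * (s/10)}

/-- `Λ_s(x)` is red: each of its 400 subsquares contains at least one point of `P`. -/
def red (P : Set (ℝ × ℝ)) (x : ℝ × ℝ) (s : ℝ) : Prop :=
  ∀ i j : Fin 20, (P ∩ subsq x s i j).Nonempty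

/-- `Λ_s(x)` is `A`-red: each of its 400 subsquares contains at least one and at most
`A s²` points of `P`. -/
def ARed (P : Set (ℝ × ℝ)) (x : ℝ × ℝ) (s A : ℝ) : Prop :=
  ∀ i j : Fin 20, (P ∩ subsq x s i j).Nonempty ∧ (P ∩ subsq x s i j).Finite ∧
    ((P ∩ subsq x s i j).ncard : ℝ) ≤ A * s^2

-- ## Auxiliary lemmas
-- squared distance
def sq2 (p q : ℝ × ℝ) : ℝ := (p.1 - q.1)^2 + (p.2 - q.2)^2

lemma sq2_nonneg (p q : ℝ × ℝ) : 0 ≤ sq2 p q := by unfold sq2; positivity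

lemma eDist_eq (p q : ℝ × ℝ) : eDist p q = Real.sqrt (sq2 p q) := rfl

lemma eDist_nonneg (p q : ℝ × ℝ) : 0 ≤ eDist p q := Real.sqrt_nonneg _

lemma sq_eDist (p q : ℝ × ℝ) : (eDist p q)^2 = sq2 p q := by
  rw [eDist_eq, Real.sq_sqrt (sq2_nonneg p q)]

lemma sq_eDist' (p q : ℝ × ℝ) : (eDist p q)^2 = (p.1 - q.1)^2 + (p.2 - q.2)^2 := sq_eDist p q

lemma eDist_comm (p q : ℝ × ℝ) : eDist p q = eDist q p := by
  unfold eDist; ring_nf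

lemma eDist_self (p : ℝ × ℝ) : eDist p p = 0 := by
  unfold eDist; simp

lemma eDist_eq_zero {p q : ℝ × ℝ} (h : eDist p q = 0) : p = q := by
  have h2 : (p.1 - q.1)^2 + (p.2 - q.2)^2 ≤ 0 := Real.sqrt_eq_zero'.1 h
  have e1 : p.1 = q.1 := by nlinarith [sq_nonneg (p.1 - q.1), sq_nonneg (p.2 - q.2)]
  have e2 : p.2 = q.2 := by nlinarith [sq_nonneg (p.1 - q.1), sq_nonneg (p.2 - q.2)]
  exact Prod.ext e1 e2

lemma eDist_le_iff {p a b : ℝ × ℝ} : eDist p a ≤ eDist p b ↔ sq2 p a ≤ sq2 p b := by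
  rw [eDist_eq, eDist_eq, Real.sqrt_le_sqrt_iff (sq2_nonneg p b)]

lemma eDist_le_of_sq2_le {p a b : ℝ × ℝ} (h : sq2 p a ≤ sq2 p b) : eDist p a ≤ eDist p b :=
  eDist_le_iff.2 h

lemma eDist_triangle (p q r : ℝ × ℝ) : eDist p r ≤ eDist p q + eDist q r := by
  rw [eDist_eq, eDist_eq, eDist_eq]
  set A := Real.sqrt (sq2 p q) with hA
  set B := Real.sqrt (sq2 q r) with hB
  have ha : A^2 = (p.1 - q.1)^2 + (p.2 - q.2)^2 := Real.sq_sqrt (sq2_nonneg p q)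
  have hb : B^2 = (q.1 - r.1)^2 + (q.2 - r.2)^2 := Real.sq_sqrt (sq2_nonneg q r)
  have ha0 : 0 ≤ A := Real.sqrt_nonneg _
  have hb0 : 0 ≤ B := Real.sqrt_nonneg _
  have key : sq2 p r ≤ (A + B)^2 := by
    have cs : (p.1 - q.1) * (q.1 - r.1) + (p.2 - q.2) * (q.2 - r.2) ≤ A * B := by
      nlinarith [sq_nonneg ((p.1-q.1)*(q.2-r.2) - (p.2-q.2)*(q.1-r.1)),
        mul_nonneg ha0 hb0,
        sq_nonneg (A*B - ((p.1 - q.1) * (q.1 - r.1) + (p.2 - q.2) * (q.2 - r.2)))]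
    unfold sq2 at *
    nlinarith [cs]
  calc Real.sqrt (sq2 p r) ≤ Real.sqrt ((A+B)^2) := Real.sqrt_le_sqrt key
    _ = |A + B| := Real.sqrt_sq_eq_abs _
    _ = A + B := abs_of_nonneg (by positivity)

-- distance between two points on a line
lemma eDist_line (a d : ℝ × ℝ) (t t' : ℝ) :
    eDist (a + t • d) (a + t' • d) = |t - t'| * Real.sqrt (d.1^2 + d.2^2) := by
  have : eDist (a + t • d) (a + t' • d) = Real.sqrt ((t-t')^2 * (d.1^2 + d.2^2)) := by
    unfold eDist
    congr 1
    simp [Prod.fst_add, Prod.snd_add, Prod.smul_fst, Prod.smul_snd, smul_eq_mul]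
    ring
  rw [this, Real.sqrt_mul (sq_nonneg _), Real.sqrt_sq_eq_abs]

-- convexity-type bound: a point of the segment [a,b] is within max distance of c
lemma eDist_combo_le {a b c : ℝ × ℝ} {μ ν : ℝ} (hμ : 0 ≤ μ) (hν : 0 ≤ ν) (hμν : μ + ν = 1) :
    eDist (μ • a + ν • b) c ≤ μ * eDist a c + ν * eDist b c := by
  rw [eDist_eq, eDist_eq, eDist_eq]
  set A := Real.sqrt (sq2 a c) with hA
  set B := Real.sqrt (sq2 b c) with hB
  have ha : A^2 = (a.1 - c.1)^2 + (a.2 - c.2)^2 := Real.sq_sqrt (sq2_nonneg a c)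
  have hb : B^2 = (b.1 - c.1)^2 + (b.2 - c.2)^2 := Real.sq_sqrt (sq2_nonneg b c)
  have ha0 : 0 ≤ A := Real.sqrt_nonneg _
  have hb0 : 0 ≤ B := Real.sqrt_nonneg _
  have key : sq2 (μ • a + ν • b) c ≤ (μ * A + ν * B)^2 := by
    have cs : (a.1 - c.1) * (b.1 - c.1) + (a.2 - c.2) * (b.2 - c.2) ≤ A * B := by
      nlinarith [sq_nonneg ((a.1-c.1)*(b.2-c.2) - (a.2-c.2)*(b.1-c.1)),
        mul_nonneg ha0 hb0,
        sq_nonneg (A*B - ((a.1 - c.1) * (b.1 - c.1) + (a.2 - c.2) * (b.2 - c.2)))]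
    have hc1 : (μ • a + ν • b).1 = μ * a.1 + ν * b.1 := rfl
    have hc2 : (μ • a + ν • b).2 = μ * a.2 + ν * b.2 := rfl
    unfold sq2 at *
    rw [hc1, hc2]
    have h1 : μ = 1 - ν := by linarith
    subst h1
    nlinarith [cs, mul_nonneg hμ hν, sq_nonneg (A - B), mul_nonneg (mul_nonneg hμ hν) (mul_nonneg ha0 hb0)]
  calc Real.sqrt (sq2 (μ • a + ν • b) c) ≤ Real.sqrt ((μ*A + ν*B)^2) := Real.sqrt_le_sqrt key
    _ = |μ*A + ν*B| := Real.sqrt_sq_eq_abs _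
    _ = μ*A + ν*B := abs_of_nonneg (by positivity)


-- ### part B
/-- `w` is a nearest point of `P` to `q`. -/
def near (P : Set (ℝ × ℝ)) (q w : ℝ × ℝ) : Prop :=
  w ∈ P ∧ ∀ y ∈ P, eDist q w ≤ eDist q y

lemma near_self {P : Set (ℝ × ℝ)} {u : ℝ × ℝ} (hu : u ∈ P) : near P u u :=
  ⟨hu, fun y _ => by rw [eDist_self]; exact eDist_nonneg _ _⟩

lemma near_at_self {P : Set (ℝ × ℝ)} {u y : ℝ × ℝ} (hu : u ∈ P) (hy : near P u y) : y = u := by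
  have h := hy.2 u hu
  rw [eDist_self] at h
  exact (eDist_eq_zero (le_antisymm h (eDist_nonneg _ _))).symm

lemma distToSet_eq {P : Set (ℝ × ℝ)} {q w : ℝ × ℝ} (h : near P q w) :
    distToSet q P = eDist q w := by
  apply le_antisymm
  · exact csInf_le ⟨0, fun e he => by obtain ⟨y, hy, rfl⟩ := he; exact eDist_nonneg _ _⟩
      ⟨w, h.1, rfl⟩
  · refine le_csInf ⟨eDist q w, w, h.1, rfl⟩ ?_
    rintro e ⟨y, hy, rfl⟩
    exact h.2 y hy

lemma near_exists {P : Set (ℝ × ℝ)} (hP : LocFin P) {y0 : ℝ × ℝ} (hy0 : y0 ∈ P) (q : ℝ × ℝ) :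
    ∃ w, near P q w := by
  set R := eDist (0,0) q + eDist q y0 with hR
  have hfin := hP R
  have hy0R : eDist (0,0) y0 ≤ R := eDist_triangle (0,0) q y0
  have hne : (P ∩ {z | eDist (0,0) z ≤ R}).Nonempty := ⟨y0, hy0, hy0R⟩
  obtain ⟨w, hw, hmin⟩ := Set.exists_min_image _ (fun z => eDist q z) hfin hne
  refine ⟨w, hw.1, fun y hy => ?_⟩
  by_cases hyS : eDist (0,0) y ≤ R
  · exact hmin y ⟨hy, hyS⟩
  · push_neg at hyS
    have h1 : eDist q w ≤ eDist q y0 := hmin y0 ⟨hy0, hy0R⟩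
    have h2 : eDist (0,0) y ≤ eDist (0,0) q + eDist q y := eDist_triangle _ _ _
    linarith

lemma near_gap {P : Set (ℝ × ℝ)} (hP : LocFin P) {q w : ℝ × ℝ} (h : near P q w) :
    ∃ δ, 0 < δ ∧ δ ≤ 1 ∧ ∀ y ∈ P, eDist q y ≤ eDist q w + δ → eDist q y = eDist q w := by
  set r := eDist q w with hr
  set F := (P ∩ {z | eDist (0,0) z ≤ eDist (0,0) q + r + 1}) \ {y | eDist q y = r} with hF
  have hFfin : F.Finite := ((hP (eDist (0,0) q + r + 1)).subset Set.diff_subset)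
  by_cases hFe : F.Nonempty
  · obtain ⟨m, hm, hmin⟩ := Set.exists_min_image F (fun z => eDist q z) hFfin hFe
    have hmr : r < eDist q m := lt_of_le_of_ne (h.2 m hm.1.1) (fun e => hm.2 e.symm)
    refine ⟨min ((eDist q m - r)/2) 1, lt_min (by linarith) one_pos, min_le_right _ _, ?_⟩
    intro y hy hle
    by_contra hne
    have hyb : eDist (0,0) y ≤ eDist (0,0) q + r + 1 := by
      have := eDist_triangle (0,0) q y
      have := min_le_right ((eDist q m - r)/2) 1
      linarith
    have hyF : y ∈ F := ⟨⟨hy, hyb⟩, hne⟩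
    have h2 := hmin y hyF
    have := min_le_left ((eDist q m - r)/2) 1
    linarith
  · refine ⟨1, one_pos, le_refl 1, ?_⟩
    intro y hy hle
    by_contra hne
    apply hFe
    refine ⟨y, ⟨⟨hy, ?_⟩, hne⟩⟩
    have := eDist_triangle (0,0) q y
    simp only [Set.mem_setOf_eq]
    linarith

/-- stability: any nearest point at a nearby location is a nearest point distance at `q`. -/
lemma near_stab {P : Set (ℝ × ℝ)} (hP : LocFin P) {q w : ℝ × ℝ} (h : near P q w) :
    ∃ δ, 0 < δ ∧ ∀ q', eDist q q' ≤ δ → ∀ y, near P q' y → eDist q y = eDist q w := by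
  obtain ⟨δ, hδ0, hδ1, hgap⟩ := near_gap hP h
  refine ⟨δ/3, by positivity, fun q' hq' y hy => ?_⟩
  have h1 : eDist q y ≤ eDist q q' + eDist q' y := eDist_triangle _ _ _
  have h2 : eDist q' y ≤ eDist q' w := hy.2 w h.1
  have h3 : eDist q' w ≤ eDist q' q + eDist q w := eDist_triangle _ _ _
  have h4 : eDist q' q = eDist q q' := eDist_comm _ _
  exact hgap y hy.1 (by linarith)

/-- the set of parameters where `w` is nearest is "convex" along a line. -/
lemma near_convex {P : Set (ℝ × ℝ)} {a d w : ℝ × ℝ} {t1 t2 t3 : ℝ}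
    (h12 : t1 ≤ t2) (h23 : t2 ≤ t3)
    (h1 : near P (a + t1 • d) w) (h3 : near P (a + t3 • d) w) :
    near P (a + t2 • d) w := by
  refine ⟨h1.1, fun y hy => ?_⟩
  rw [eDist_le_iff]
  have k1 : sq2 (a + t1 • d) w ≤ sq2 (a + t1 • d) y := eDist_le_iff.1 (h1.2 y hy)
  have k3 : sq2 (a + t3 • d) w ≤ sq2 (a + t3 • d) y := eDist_le_iff.1 (h3.2 y hy)
  have aff : ∀ t : ℝ, sq2 (a + t • d) w - sq2 (a + t • d) y
      = (sq2 a w - sq2 a y) + t * (2*(d.1*(y.1-w.1) + d.2*(y.2-w.2))) := by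
    intro t
    have e1 : (a + t • d).1 = a.1 + t * d.1 := rfl
    have e2 : (a + t • d).2 = a.2 + t * d.2 := rfl
    unfold sq2
    rw [e1, e2]
    ring
  have A1 := aff t1
  have A2 := aff t2
  have A3 := aff t3
  rcases le_or_gt 0 (2*(d.1*(y.1-w.1) + d.2*(y.2-w.2))) with hB | hB
  · nlinarith [mul_le_mul_of_nonneg_right h23 hB]
  · nlinarith [mul_le_mul_of_nonneg_right h12 (le_of_lt (neg_pos.2 hB))]


-- ### part C : transition lemma
lemma trans_lemma {P : Set (ℝ × ℝ)} (hP : LocFin P) (a d : ℝ × ℝ) (ρ : ℝ)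
    (Hρ : ∀ τ ∈ Set.Icc (0:ℝ) 1, ∃ y ∈ P, eDist (a + τ • d) y ≤ ρ)
    (H2 : ∀ τ : ℝ, 0 ≤ τ → τ < 1 → ∀ y z y', near P (a + τ • d) y → near P (a + τ • d) z →
      near P (a + τ • d) y' → y = z ∨ y = y' ∨ z = y')
    {t : ℝ} (ht : t ∈ Set.Icc (0:ℝ) 1) {w : ℝ × ℝ} (hw : near P (a + t • d) w) :
    near P (a + (1:ℝ) • d) w ∨
    ∃ t'' ∈ Set.Icc (0:ℝ) 1, t < t'' ∧ ∃ z, near P (a + t'' • d) z ∧ z ≠ w ∧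
      (delaunay P).Adj w z ∧
      (∃ τ ∈ Set.Icc (0:ℝ) 1, eDist (a + τ • d) w ≤ ρ ∧ eDist (a + τ • d) z ≤ ρ) ∧
      (∀ τ ∈ Set.Icc (0:ℝ) 1, t'' ≤ τ → ¬ near P (a + τ • d) w) := by
  classical
  set p : ℝ → ℝ × ℝ := fun τ => a + τ • d with hp
  set T : Set ℝ := {τ ∈ Set.Icc t 1 | ∀ y ∈ P, eDist (p τ) w ≤ eDist (p τ) y} with hT
  have hTmem : ∀ {τ}, τ ∈ T → near P (p τ) w := fun hτ => ⟨hw.1, hτ.2⟩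
  have htT : t ∈ T := ⟨⟨le_refl t, ht.2⟩, hw.2⟩
  have hTne : T.Nonempty := ⟨t, htT⟩
  have hTsub : T ⊆ Set.Icc t 1 := fun τ hτ => hτ.1
  have hTbdd : BddAbove T := ⟨1, fun τ hτ => (hTsub hτ).2⟩
  have hcont : ∀ b : ℝ × ℝ, Continuous fun τ : ℝ => eDist (p τ) b := by
    intro b
    have e : (fun τ : ℝ => eDist (p τ) b)
        = fun τ : ℝ => Real.sqrt ((a.1 + τ * d.1 - b.1)^2 + (a.2 + τ * d.2 - b.2)^2) := rfl
    rw [e]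
    have c1 : Continuous fun τ : ℝ => a.1 + τ * d.1 - b.1 :=
      (continuous_const.add (continuous_id.mul continuous_const)).sub continuous_const
    have c2 : Continuous fun τ : ℝ => a.2 + τ * d.2 - b.2 :=
      (continuous_const.add (continuous_id.mul continuous_const)).sub continuous_const
    exact Real.continuous_sqrt.comp ((c1.pow 2).add (c2.pow 2))
  have hTclosed : IsClosed T := by
    have e : T = Set.Icc t 1 ∩ ⋂ y ∈ P, {τ : ℝ | eDist (p τ) w ≤ eDist (p τ) y} := by
      ext τ
      constructor
      · rintro ⟨h1, h2⟩
        exact ⟨h1, Set.mem_iInter₂.2 h2⟩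
      · rintro ⟨h1, h2⟩
        exact ⟨h1, fun y hy => Set.mem_iInter₂.1 h2 y hy⟩
    rw [e]
    exact isClosed_Icc.inter (isClosed_iInter fun y => isClosed_iInter fun _ =>
      isClosed_le (hcont w) (hcont y))
  set t' := sSup T with ht'
  have ht'T : t' ∈ T := by
    refine IsCompact.sSup_mem (IsCompact.of_isClosed_subset isCompact_Icc hTclosed hTsub) hTne
  have ht'I : t' ∈ Set.Icc t 1 := hTsub ht'T
  have hw' : near P (p t') w := hTmem ht'T
  have htmax : ∀ τ, t' < τ → τ ≤ 1 → ¬ near P (p τ) w := by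
    intro τ hlt hle hnear
    have : τ ∈ T := ⟨⟨le_trans ht'I.1 hlt.le, hle⟩, hnear.2⟩
    exact absurd (le_csSup hTbdd this) (not_le.2 hlt)
  rcases eq_or_lt_of_le ht'I.2 with h1 | hlt1
  · left
    have : near P (p 1) w := h1 ▸ hw'
    exact this
  · right
    obtain ⟨δ, hδ0, hstab⟩ := near_stab hP hw'
    set L := Real.sqrt (d.1^2 + d.2^2) with hL
    have hL0 : 0 ≤ L := Real.sqrt_nonneg _
    set τ₀ := min 1 (t' + δ / (L + 1)) with hτ₀
    have hτ₀gt : t' < τ₀ := lt_min hlt1 (lt_add_of_pos_right _ (by positivity))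
    have hτ₀le : τ₀ ≤ 1 := min_le_left _ _
    have hτ₀I : τ₀ ∈ Set.Icc (0:ℝ) 1 := ⟨le_trans (le_trans ht.1 ht'I.1) hτ₀gt.le, hτ₀le⟩
    have hclose : eDist (p t') (p τ₀) ≤ δ := by
      have e : eDist (p t') (p τ₀) = |t' - τ₀| * L := eDist_line a d t' τ₀
      rw [e]
      have h1 : |t' - τ₀| = τ₀ - t' := by rw [abs_sub_comm, abs_of_nonneg (by linarith)]
      rw [h1]
      have h2 : τ₀ - t' ≤ δ / (L + 1) := by
        have := min_le_right 1 (t' + δ / (L + 1))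
        linarith
      calc (τ₀ - t') * L ≤ (δ / (L+1)) * L := by
            apply mul_le_mul_of_nonneg_right h2 hL0
        _ ≤ δ := by
            rw [div_mul_eq_mul_div, div_le_iff₀ (by linarith)]
            nlinarith
    obtain ⟨z, hz⟩ := near_exists hP hw.1 (p τ₀)
    have hzw : z ≠ w := by
      intro h
      exact htmax τ₀ hτ₀gt hτ₀le (h ▸ hz)
    have hzr : eDist (p t') z = eDist (p t') w := hstab (p τ₀) hclose z hz
    have hz' : near P (p t') z := ⟨hz.1, fun y hy => by rw [hzr]; exact hw'.2 y hy⟩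
    -- every nearest point at p t' is w or z
    have hN : ∀ y, near P (p t') y → y = w ∨ y = z := by
      intro y hy
      have ht'0 : 0 ≤ t' := le_trans ht.1 ht'I.1
      rcases H2 t' ht'0 hlt1 w z y hw' hz' hy with h | h | h
      · exact absurd h.symm hzw
      · exact Or.inl h.symm
      · exact Or.inr h.symm
    -- the bisector construction
    set m := p t' with hm
    set n : ℝ × ℝ := (-(z.2 - w.2), z.1 - w.1) with hn
    have hzw' : (z.1 - w.1)^2 + (z.2 - w.2)^2 > 0 := by
      rcases Prod.ext_iff.not.1 hzw with h
      by_contra hc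
      push_neg at hc
      have h1 : z.1 = w.1 := by nlinarith [sq_nonneg (z.1-w.1), sq_nonneg (z.2-w.2)]
      have h2 : z.2 = w.2 := by nlinarith [sq_nonneg (z.1-w.1), sq_nonneg (z.2-w.2)]
      exact hzw (Prod.ext h1 h2)
    have hLn : 0 < Real.sqrt (n.1^2 + n.2^2) := by
      apply Real.sqrt_pos.2
      simp only [hn]
      nlinarith
    set Ln := Real.sqrt (n.1^2 + n.2^2) with hLnd
    set c₀ := δ / (Ln + 1) with hc₀
    have hc₀0 : 0 < c₀ := by positivity
    -- key: for 0 ≤ c ≤ c₀, the point m + c • n is equidistant from w, z and they are nearest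
    have hkey : ∀ c, 0 ≤ c → c ≤ c₀ →
        eDist (m + c • n) w = eDist (m + c • n) z ∧ near P (m + c • n) w := by
      intro c hc0 hcc
      have hcls : eDist m (m + c • n) ≤ δ := by
        have em : m + (0:ℝ) • n = m := by rw [zero_smul, add_zero]
        have e1 := eDist_line m n (0:ℝ) c
        rw [em] at e1
        rw [e1, ← hLnd, zero_sub, abs_neg, abs_of_nonneg hc0]
        calc c * Ln ≤ c₀ * Ln := mul_le_mul_of_nonneg_right hcc hLn.le
          _ ≤ δ := by
            rw [hc₀, div_mul_eq_mul_div, div_le_iff₀ (by linarith)]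
            nlinarith
      -- equidistance
      have hsq : sq2 (m + c • n) w = sq2 (m + c • n) z := by
        have hmwz : sq2 m w = sq2 m z := by
          rw [← sq_eDist, ← sq_eDist, hzr]
        have e1 : (m + c • n).1 = m.1 + c * (-(z.2 - w.2)) := rfl
        have e2 : (m + c • n).2 = m.2 + c * (z.1 - w.1) := rfl
        unfold sq2 at hmwz ⊢
        rw [e1, e2]
        linear_combination hmwz
      have heq : eDist (m + c • n) w = eDist (m + c • n) z := by
        rw [eDist_eq, eDist_eq, hsq]
      refine ⟨heq, ?_⟩
      obtain ⟨y, hy⟩ := near_exists hP hw.1 (m + c • n)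
      have hyr : eDist m y = eDist m w := hstab (m + c • n) hcls y hy
      have hyn : near P m y := ⟨hy.1, fun y' hy' => by rw [hyr]; exact hw'.2 y' hy'⟩
      have : eDist (m + c • n) w ≤ eDist (m + c • n) y := by
        rcases hN y hyn with h | h
        · rw [h]
        · rw [h, ← heq]
      exact ⟨hw.1, fun y' hy' => le_trans this (hy.2 y' hy')⟩
    -- adjacency
    have hadj : (delaunay P).Adj w z := by
      show w ≠ z ∧ w ∈ P ∧ z ∈ P ∧ _
      refine ⟨fun h => hzw h.symm, hw.1, hz.1, ?_⟩
      have h0 := hkey 0 (le_refl 0) hc₀0.le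
      have hc := hkey c₀ hc₀0.le (le_refl c₀)
      have hm0 : m + (0:ℝ) • n = m := by rw [zero_smul, add_zero]
      refine ⟨m, ?_, m + c₀ • n, ?_, ?_⟩
      · rw [← hm0]
        exact ⟨h0.1, (distToSet_eq h0.2).symm⟩
      · exact ⟨hc.1, (distToSet_eq hc.2).symm⟩
      · intro hcon
        have h0' : eDist m (m + c₀ • n) = 0 := by rw [← hcon]; exact eDist_self m
        have e1 := eDist_line m n (0:ℝ) c₀
        rw [hm0] at e1
        rw [e1, ← hLnd, zero_sub, abs_neg, abs_of_nonneg hc₀0.le] at h0'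
        nlinarith
    -- location info
    have hloc : ∃ τ ∈ Set.Icc (0:ℝ) 1, eDist (a + τ • d) w ≤ ρ ∧ eDist (a + τ • d) z ≤ ρ := by
      refine ⟨t', ⟨le_trans ht.1 ht'I.1, ht'I.2⟩, ?_, ?_⟩
      · obtain ⟨y, hy, hyρ⟩ := Hρ t' ⟨le_trans ht.1 ht'I.1, ht'I.2⟩
        exact le_trans (hw'.2 y hy) hyρ
      · obtain ⟨y, hy, hyρ⟩ := Hρ t' ⟨le_trans ht.1 ht'I.1, ht'I.2⟩
        exact le_trans (hz'.2 y hy) hyρ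
    exact ⟨τ₀, hτ₀I, lt_of_le_of_lt ht'I.1 hτ₀gt, z, hz, hzw, hadj, hloc,
      fun τ hτ hτ₀τ => htmax τ (lt_of_lt_of_le hτ₀gt hτ₀τ) hτ.2⟩


-- ### part D : walk along one segment
lemma walkseg {P : Set (ℝ × ℝ)} (hP : LocFin P) (a d : ℝ × ℝ) (ρ : ℝ)
    (Hρ : ∀ τ ∈ Set.Icc (0:ℝ) 1, ∃ y ∈ P, eDist (a + τ • d) y ≤ ρ)
    (H2 : ∀ τ : ℝ, 0 ≤ τ → τ < 1 → ∀ y z y', near P (a + τ • d) y → near P (a + τ • d) z →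
      near P (a + τ • d) y' → y = z ∨ y = y' ∨ z = y')
    {w : ℝ × ℝ} (hw : near P a w) :
    ∃ w₁, near P (a + d) w₁ ∧ ∃ W : (delaunay P).Walk w w₁,
      (∀ z ∈ W.support, z ∈ P ∧ ∃ τ ∈ Set.Icc (0:ℝ) 1, eDist (a + τ • d) z ≤ ρ) ∧
      (∀ e₁ e₂ : ℝ × ℝ, s(e₁, e₂) ∈ W.edges →
        ∃ τ ∈ Set.Icc (0:ℝ) 1, eDist (a + τ • d) e₁ ≤ ρ ∧ eDist (a + τ • d) e₂ ≤ ρ) := by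
  classical
  set L := Real.sqrt (d.1^2 + d.2^2) with hL
  have hL0 : 0 ≤ L := Real.sqrt_nonneg _
  set M : ℝ → Set (ℝ × ℝ) := fun t => {y ∈ P | ∃ τ ∈ Set.Icc t 1, near P (a + τ • d) y}
    with hM
  have hMfin : ∀ t : ℝ, 0 ≤ t → (M t).Finite := by
    intro t ht0
    apply (hP (eDist (0,0) a + L + ρ)).subset
    rintro y ⟨hy, τ, hτ, hnear⟩
    have hτI : τ ∈ Set.Icc (0:ℝ) 1 := ⟨le_trans ht0 hτ.1, hτ.2⟩
    obtain ⟨y', hy', hy'ρ⟩ := Hρ τ hτI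
    have h1 : eDist (a + τ • d) y ≤ ρ := le_trans (hnear.2 y' hy') hy'ρ
    have h2 : eDist (0,0) y ≤ eDist (0,0) (a + τ • d) + eDist (a + τ • d) y :=
      eDist_triangle _ _ _
    have h3 : eDist (0,0) (a + τ • d) ≤ eDist (0,0) a + eDist a (a + τ • d) :=
      eDist_triangle _ _ _
    have e0 : a + (0:ℝ) • d = a := by rw [zero_smul, add_zero]
    have h4 : eDist a (a + τ • d) ≤ L := by
      have e := eDist_line a d (0:ℝ) τ
      rw [e0] at e
      rw [e, zero_sub, abs_neg, abs_of_nonneg hτI.1, ← hL]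
      nlinarith [hτI.2]
    exact ⟨hy, by simp only [Set.mem_setOf_eq]; linarith⟩
  have AUX : ∀ n : ℕ, ∀ t ∈ Set.Icc (0:ℝ) 1, ∀ w', near P (a + t • d) w' →
      (M t).ncard ≤ n →
      ∃ w₁, near P (a + (1:ℝ) • d) w₁ ∧ ∃ W : (delaunay P).Walk w' w₁,
        (∀ z ∈ W.support, z ∈ P ∧ ∃ τ ∈ Set.Icc (0:ℝ) 1, eDist (a + τ • d) z ≤ ρ) ∧
        (∀ e₁ e₂ : ℝ × ℝ, s(e₁, e₂) ∈ W.edges →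
          ∃ τ ∈ Set.Icc (0:ℝ) 1, eDist (a + τ • d) e₁ ≤ ρ ∧ eDist (a + τ • d) e₂ ≤ ρ) := by
    intro n
    induction n with
    | zero =>
      intro t ht w' hw' hcard
      exfalso
      have hmem : w' ∈ M t := ⟨hw'.1, t, ⟨le_refl t, ht.2⟩, hw'⟩
      have : 0 < (M t).ncard := (Set.ncard_pos (hMfin t ht.1)).2 ⟨w', hmem⟩
      omega
    | succ n ih =>
      intro t ht w' hw' hcard
      rcases trans_lemma hP a d ρ Hρ H2 ht hw' with h | ⟨t'', ht'', htt'', z, hz, hzw, hadj, hloc, hnot⟩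
      · refine ⟨w', h, SimpleGraph.Walk.nil, ?_, ?_⟩
        · intro z hzs
          rw [SimpleGraph.Walk.support_nil] at hzs
          rcases List.mem_singleton.1 hzs with rfl
          refine ⟨hw'.1, t, ht, ?_⟩
          obtain ⟨y', hy', hy'ρ⟩ := Hρ t ht
          exact le_trans (hw'.2 y' hy') hy'ρ
        · intro e₁ e₂ he
          rw [SimpleGraph.Walk.edges_nil] at he
          exact absurd he List.not_mem_nil
      · have hsub : M t'' ⊆ M t \ {w'} := by
          rintro y ⟨hy, τ, hτ, hnear⟩
          have hτI : τ ∈ Set.Icc (0:ℝ) 1 := ⟨le_trans ht''.1 hτ.1, hτ.2⟩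
          constructor
          · exact ⟨hy, τ, ⟨le_trans (le_of_lt htt'') hτ.1, hτ.2⟩, hnear⟩
          · intro hyw
            rw [Set.mem_singleton_iff] at hyw
            subst hyw
            exact hnot τ hτI hτ.1 hnear
        have hwM : w' ∈ M t := ⟨hw'.1, t, ⟨le_refl t, ht.2⟩, hw'⟩
        have hcard' : (M t'').ncard ≤ n := by
          have h1 : (M t'').ncard ≤ (M t \ {w'}).ncard :=
            Set.ncard_le_ncard hsub ((hMfin t ht.1).subset Set.diff_subset)
          have h2 : (M t \ {w'}).ncard = (M t).ncard - 1 :=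
            Set.ncard_diff_singleton_of_mem hwM
          have h3 : 0 < (M t).ncard := (Set.ncard_pos (hMfin t ht.1)).2 ⟨w', hwM⟩
          omega
        obtain ⟨w₁, hw₁, W', hWs, hWe⟩ := ih t'' ht'' z hz hcard'
        refine ⟨w₁, hw₁, SimpleGraph.Walk.cons hadj W', ?_, ?_⟩
        · intro z' hz'
          rw [SimpleGraph.Walk.support_cons] at hz'
          rcases List.mem_cons.1 hz' with rfl | hz'
          · refine ⟨hw'.1, ?_⟩
            obtain ⟨τ, hτ, hτw, _⟩ := hloc
            exact ⟨τ, hτ, hτw⟩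
          · exact hWs z' hz'
        · intro e₁ e₂ he
          rw [SimpleGraph.Walk.edges_cons] at he
          rcases List.mem_cons.1 he with he | he
          · have h12 : (e₁ = w' ∧ e₂ = z) ∨ (e₁ = z ∧ e₂ = w') := by
              rw [Sym2.eq_iff] at he
              tauto
            obtain ⟨τ, hτ, hτw, hτz⟩ := hloc
            rcases h12 with ⟨rfl, rfl⟩ | ⟨rfl, rfl⟩
            · exact ⟨τ, hτ, hτw, hτz⟩
            · exact ⟨τ, hτ, hτz, hτw⟩
          · exact hWe e₁ e₂ he
  have h0I : (0:ℝ) ∈ Set.Icc (0:ℝ) 1 := ⟨le_refl 0, zero_le_one⟩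
  have e0 : a + (0:ℝ) • d = a := by rw [zero_smul, add_zero]
  have hw0 : near P (a + (0:ℝ) • d) w := by rw [e0]; exact hw
  obtain ⟨w₁, hw₁, W, hWs, hWe⟩ := AUX (M 0).ncard 0 h0I w hw0 (le_refl _)
  have e1 : a + (1:ℝ) • d = a + d := by rw [one_smul]
  rw [e1] at hw₁
  exact ⟨w₁, hw₁, W, hWs, hWe⟩


lemma eDist_translate (x y w : ℝ × ℝ) : eDist (x + w) (y + w) = eDist x y := by
  unfold eDist
  have e1 : (x + w).1 - (y + w).1 = x.1 - y.1 := by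
    simp only [Prod.fst_add]; ring
  have e2 : (x + w).2 - (y + w).2 = x.2 - y.2 := by
    simp only [Prod.snd_add]; ring
  rw [e1, e2]

-- points whose coordinates differ by at most s/10 are at eDist ≤ 0.15 s
lemma eDist_le_of_coords {p q : ℝ × ℝ} {s : ℝ} (hs : 0 < s)
    (h1 : |p.1 - q.1| ≤ s/10) (h2 : |p.2 - q.2| ≤ s/10) : eDist p q ≤ 0.15 * s := by
  unfold eDist
  have hb : (p.1 - q.1)^2 + (p.2 - q.2)^2 ≤ (0.15*s)^2 := by
    have a1 := abs_le.1 h1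
    have a2 := abs_le.1 h2
    nlinarith [a1.1, a1.2, a2.1, a2.2]
  calc Real.sqrt ((p.1 - q.1)^2 + (p.2 - q.2)^2) ≤ Real.sqrt ((0.15*s)^2) :=
        Real.sqrt_le_sqrt hb
    _ = |0.15*s| := Real.sqrt_sq_eq_abs _
    _ = 0.15*s := abs_of_nonneg (by positivity)

lemma subsq_subset_square {x : ℝ × ℝ} {s : ℝ} (hs : 0 < s) (i j : Fin 20) :
    subsq x s i j ⊆ square x s := by
  rintro p ⟨h1, h2, h3, h4⟩
  have hi : ((i : ℕ) : ℝ) ≤ 19 := by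
    have := i.2; exact_mod_cast Nat.lt_succ_iff.1 (by exact_mod_cast this)
  have hj : ((j : ℕ) : ℝ) ≤ 19 := by
    have := j.2; exact_mod_cast Nat.lt_succ_iff.1 (by exact_mod_cast this)
  have hi0 : (0:ℝ) ≤ ((i : ℕ) : ℝ) := Nat.cast_nonneg _
  have hj0 : (0:ℝ) ≤ ((j : ℕ) : ℝ) := Nat.cast_nonneg _
  constructor
  · rw [abs_le]; constructor <;> nlinarith
  · rw [abs_le]; constructor <;> nlinarith

lemma square_mem_subsq {x : ℝ × ℝ} {s : ℝ} (hs : 0 < s) {q : ℝ × ℝ} (hq : q ∈ square x s) :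
    ∃ i j : Fin 20, q ∈ subsq x s i j := by
  obtain ⟨h1, h2⟩ := hq
  have b1 := abs_le.1 h1
  have b2 := abs_le.1 h2
  -- index along a coordinate
  have key : ∀ c z : ℝ, z - s ≤ c → c ≤ z + s → ∃ i : Fin 20,
      z - s + (i : ℕ) * (s/10) ≤ c ∧ c ≤ z - s + ((i : ℕ) + 1) * (s/10) := by
    intro c z hc1 hc2
    set u := (c - z + s) / (s/10) with hu
    have hs10 : 0 < s/10 := by linarith
    have hu0 : 0 ≤ u := by
      apply div_nonneg _ hs10.le; linarith
    have hu20 : u ≤ 20 := by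
      rw [hu, div_le_iff₀ hs10]; linarith
    set k := Int.toNat ⌊u⌋ with hk
    have hku : ((k : ℤ) : ℝ) ≤ u := by
      rw [hk, Int.toNat_of_nonneg (Int.le_floor.2 (by exact_mod_cast hu0))]
      exact Int.floor_le u
    have huk : u < (k : ℝ) + 1 := by
      have : ((k : ℤ) : ℝ) = ((Int.toNat ⌊u⌋ : ℤ) : ℝ) := by rw [hk]
      rw [hk]
      have h3 : ((Int.toNat ⌊u⌋ : ℤ) : ℝ) = ((⌊u⌋ : ℤ) : ℝ) := by
        congr 1
        exact Int.toNat_of_nonneg (Int.le_floor.2 (by exact_mod_cast hu0))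
      push_cast at h3 ⊢
      rw [h3]
      exact Int.lt_floor_add_one u
    refine ⟨⟨min 19 k, by omega⟩, ?_, ?_⟩
    · have hmk : ((min 19 k : ℕ) : ℝ) ≤ u := by
        calc ((min 19 k : ℕ) : ℝ) ≤ (k : ℝ) := by exact_mod_cast Nat.cast_le.2 (min_le_right _ _)
          _ ≤ u := by exact_mod_cast hku
      simp only []
      have := mul_le_mul_of_nonneg_right hmk hs10.le
      rw [hu, div_mul_cancel₀] at this
      · linarith
      · linarith
    · have hmk : u ≤ ((min 19 k : ℕ) : ℝ) + 1 := by
        rcases le_or_gt k 19 with h | h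
        · have : min 19 k = k := min_eq_right h
          rw [this]
          exact_mod_cast huk.le
        · have : min 19 k = 19 := min_eq_left h.le
          rw [this]
          norm_num
          -- u ≤ 20
          exact hu20
      simp only []
      have := mul_le_mul_of_nonneg_right hmk hs10.le
      rw [hu, div_mul_cancel₀] at this
      · linarith
      · linarith
  obtain ⟨i, hi1, hi2⟩ := key q.1 x.1 (by linarith) (by linarith)
  obtain ⟨j, hj1, hj2⟩ := key q.2 x.2 (by linarith) (by linarith)
  exact ⟨i, j, hi1, hi2, hj1, hj2⟩

-- a red square is a 0.15 s net
lemma square_net {P : Set (ℝ × ℝ)} {x : ℝ × ℝ} {s A : ℝ} (hs : 0 < s)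
    (hA : ARed P x s A) {q : ℝ × ℝ} (hq : q ∈ square x s) :
    ∃ y ∈ P, eDist q y ≤ 0.15 * s := by
  obtain ⟨i, j, hij⟩ := square_mem_subsq hs hq
  obtain ⟨y, hyP, hy⟩ := (hA i j).1
  refine ⟨y, hyP, ?_⟩
  obtain ⟨c1, c2, c3, c4⟩ := hij
  obtain ⟨d1, d2, d3, d4⟩ := hy
  apply eDist_le_of_coords hs
  · rw [abs_le]; constructor <;> nlinarith
  · rw [abs_le]; constructor <;> nlinarith

-- convexity of the union of two adjacent squares (horizontal case)
lemma convex_union_horiz (X : ℝ × ℝ) {s : ℝ} (hs : 0 < s) :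
    Convex ℝ (square X s ∪ square (X + (s, 0)) s) := by
  rintro p hp q hq μ ν hμ hν hμν
  have hν' : ν = 1 - μ := by linarith
  subst hν'
  have hY1 : (X + (s, 0)).1 = X.1 + s := rfl
  have hY2 : (X + (s, 0)).2 = X.2 := by
    show X.2 + 0 = X.2; ring
  have hb : ∀ r : ℝ × ℝ, r ∈ square X s ∪ square (X + (s, 0)) s →
      X.1 - s ≤ r.1 ∧ r.1 ≤ X.1 + 2*s ∧ |r.2 - X.2| ≤ s := by
    rintro r (⟨h1, h2⟩ | ⟨h1, h2⟩)
    · have := abs_le.1 h1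
      exact ⟨by linarith [this.1], by linarith [this.2], h2⟩
    · rw [hY1] at h1; rw [hY2] at h2
      have := abs_le.1 h1
      exact ⟨by linarith [this.1], by linarith [this.2], h2⟩
  obtain ⟨p1, p2, p3⟩ := hb p hp
  obtain ⟨q1, q2, q3⟩ := hb q hq
  have hc1 : (μ • p + (1-μ) • q).1 = μ * p.1 + (1-μ) * q.1 := rfl
  have hc2 : (μ • p + (1-μ) • q).2 = μ * p.2 + (1-μ) * q.2 := rfl
  have hp3 := abs_le.1 p3
  have hq3 := abs_le.1 q3
  have h2 : |(μ • p + (1-μ) • q).2 - X.2| ≤ s := by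
    rw [hc2, abs_le]
    constructor <;>
      nlinarith [mul_le_mul_of_nonneg_left hp3.1 hμ, mul_le_mul_of_nonneg_left hp3.2 hμ,
        mul_le_mul_of_nonneg_left hq3.1 (by linarith : (0:ℝ) ≤ 1-μ), mul_le_mul_of_nonneg_left hq3.2 (by linarith : (0:ℝ) ≤ 1-μ)]
  rcases le_or_gt ((μ • p + (1-μ) • q).1) (X.1 + s) with h | h
  · left
    refine ⟨abs_le.2 ⟨?_, by linarith⟩, h2⟩
    rw [hc1]
    nlinarith [mul_le_mul_of_nonneg_left p1 hμ, mul_le_mul_of_nonneg_left q1 (by linarith : (0:ℝ) ≤ 1-μ)]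
  · right
    refine ⟨abs_le.2 ⟨?_, ?_⟩, by rw [hY2]; exact h2⟩
    · rw [hY1]; linarith
    · rw [hY1, hc1]
      nlinarith [mul_le_mul_of_nonneg_left p2 hμ, mul_le_mul_of_nonneg_left q2 (by linarith : (0:ℝ) ≤ 1-μ)]

lemma convex_union_vert (X : ℝ × ℝ) {s : ℝ} (hs : 0 < s) :
    Convex ℝ (square X s ∪ square (X + (0, s)) s) := by
  have hsw : ∀ z : ℝ × ℝ, square z s = (LinearMap.prod (LinearMap.snd ℝ ℝ ℝ)
      (LinearMap.fst ℝ ℝ ℝ)) ⁻¹' square (z.2, z.1) s := by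
    intro z
    ext p
    constructor
    · rintro ⟨h1, h2⟩; exact ⟨h2, h1⟩
    · rintro ⟨h1, h2⟩; exact ⟨h2, h1⟩
  have h1 := convex_union_horiz (X.2, X.1) hs
  have e : square X s ∪ square (X + (0, s)) s
      = (LinearMap.prod (LinearMap.snd ℝ ℝ ℝ) (LinearMap.fst ℝ ℝ ℝ)) ⁻¹'
        (square (X.2, X.1) s ∪ square ((X.2, X.1) + (s, 0)) s) := by
    rw [Set.preimage_union, ← hsw]
    congr 1
    have : ((X.2, X.1) + (s, 0)) = ((X + (0,s)).2, (X + (0,s)).1) := rfl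
    rw [this, ← hsw]
  rw [e]
  exact h1.linear_preimage _


-- ### part F : frontier crossing
lemma frontier_crossing {S : Set (ℝ × ℝ)} {u q : ℝ × ℝ} (hu : u ∈ S) (hq : q ∉ S) :
    ∃ τ ∈ Set.Icc (0:ℝ) 1, u + τ • (q - u) ∈ frontier S := by
  classical
  set g : ℝ → ℝ × ℝ := fun τ => u + τ • (q - u) with hg
  have hgc : Continuous g := by
    have : g = fun τ : ℝ => (u.1 + τ * (q.1 - u.1), u.2 + τ * (q.2 - u.2)) := rfl
    rw [this]
    exact (continuous_const.add (continuous_id.mul continuous_const)).prodMk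
      (continuous_const.add (continuous_id.mul continuous_const))
  set T := {τ ∈ Set.Icc (0:ℝ) 1 | g τ ∉ S} with hT
  have hg1 : g 1 = q := by
    show u + (1:ℝ) • (q - u) = q
    rw [one_smul]
    abel
  have hg0 : g 0 = u := by
    show u + (0:ℝ) • (q - u) = u
    rw [zero_smul, add_zero]
  have h1T : (1:ℝ) ∈ T := ⟨⟨zero_le_one, le_refl 1⟩, by rw [hg1]; exact hq⟩
  have hTne : T.Nonempty := ⟨1, h1T⟩
  have hTbdd : BddBelow T := ⟨0, fun τ hτ => hτ.1.1⟩
  set τ' := sInf T with hτ'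
  have hτ'I : τ' ∈ Set.Icc (0:ℝ) 1 := by
    constructor
    · exact le_csInf hTne fun τ hτ => hτ.1.1
    · exact csInf_le hTbdd h1T
  refine ⟨τ', hτ'I, ?_⟩
  rw [frontier_eq_closure_inter_closure]
  constructor
  · -- g τ' ∈ closure S
    rcases eq_or_lt_of_le hτ'I.1 with h0 | h0
    · have e : u + τ' • (q - u) = u := by rw [← h0, zero_smul, add_zero]
      rw [e]
      exact subset_closure hu
    · have hsub : g '' Set.Ico 0 τ' ⊆ S := by
        rintro x ⟨τ, hτ, rfl⟩
        by_contra hx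
        have : τ ∈ T := ⟨⟨hτ.1, le_trans hτ.2.le hτ'I.2⟩, hx⟩
        exact absurd (csInf_le hTbdd this) (not_le.2 hτ.2)
      have hmem : τ' ∈ closure (Set.Ico 0 τ') := by
        rw [closure_Ico (ne_of_lt h0)]
        exact ⟨h0.le, le_refl τ'⟩
      have := mem_closure_image hgc.continuousAt hmem
      exact closure_mono hsub this
  · -- g τ' ∈ closure Sᶜ
    have hsub : g '' T ⊆ Sᶜ := by
      rintro x ⟨τ, hτ, rfl⟩
      exact hτ.2
    have hmem : τ' ∈ closure T := csInf_mem_closure hTne hTbdd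
    have := mem_closure_image hgc.continuousAt hmem
    exact closure_mono hsub this

-- if every frontier point is at distance ≥ r from u, the whole ball around u is inside S
lemma ball_subset {S : Set (ℝ × ℝ)} {u : ℝ × ℝ} {r : ℝ} (hu : u ∈ S)
    (hf : ∀ q ∈ frontier S, r ≤ eDist u q) {q : ℝ × ℝ} (hq : eDist u q < r) : q ∈ S := by
  by_contra hqS
  obtain ⟨τ, hτ, hmem⟩ := frontier_crossing hu hqS
  have hd : eDist u (u + τ • (q - u)) = τ * eDist u q := by
    have e0 : u + (0:ℝ) • (q - u) = u := by rw [zero_smul, add_zero]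
    have e := eDist_line u (q - u) (0:ℝ) τ
    rw [e0] at e
    rw [e, zero_sub, abs_neg, abs_of_nonneg hτ.1]
    congr 1
    have e1 : eDist u q = eDist (u + (0:ℝ) • (q-u)) (u + (1:ℝ) • (q-u)) := by
      rw [e0]
      congr 1
      rw [one_smul]
      abel
    rw [e1, eDist_line, zero_sub, abs_neg, abs_one, one_mul]
  have := hf _ hmem
  rw [hd] at this
  nlinarith [eDist_nonneg u q, hτ.2, hτ.1]

-- ### equidistant set to three pairwise distinct points is subsingleton
lemma equidistant_subsingleton {y z y' : ℝ × ℝ} (hyz : y ≠ z) (hyy' : y ≠ y') (hzy' : z ≠ y') :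
    Set.Subsingleton {q : ℝ × ℝ | eDist q y = eDist q z ∧ eDist q y = eDist q y'} := by
  rintro q ⟨hq1, hq2⟩ q' ⟨hq'1, hq'2⟩
  have sq1 : (q.1 - y.1)^2 + (q.2 - y.2)^2 = (q.1 - z.1)^2 + (q.2 - z.2)^2 := by
    rw [← sq_eDist', ← sq_eDist', hq1]
  have sq2' : (q.1 - y.1)^2 + (q.2 - y.2)^2 = (q.1 - y'.1)^2 + (q.2 - y'.2)^2 := by
    rw [← sq_eDist', ← sq_eDist', hq2]
  have sq3 : (q'.1 - y.1)^2 + (q'.2 - y.2)^2 = (q'.1 - z.1)^2 + (q'.2 - z.2)^2 := by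
    rw [← sq_eDist', ← sq_eDist', hq'1]
  have sq4 : (q'.1 - y.1)^2 + (q'.2 - y.2)^2 = (q'.1 - y'.1)^2 + (q'.2 - y'.2)^2 := by
    rw [← sq_eDist', ← sq_eDist', hq'2]
  by_contra hne
  have hd : q - q' ≠ 0 := sub_ne_zero.2 (fun h => hne h)
  set d1 := q.1 - q'.1 with hd1
  set d2 := q.2 - q'.2 with hd2
  have hperp1 : d1 * (z.1 - y.1) + d2 * (z.2 - y.2) = 0 := by
    rw [hd1, hd2]; linear_combination sq1/2 - sq3/2
  have hperp2 : d1 * (y'.1 - y.1) + d2 * (y'.2 - y.2) = 0 := by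
    rw [hd1, hd2]; linear_combination sq2'/2 - sq4/2
  have hsq : 0 < d1^2 + d2^2 := by
    rcases eq_or_ne d1 0 with h1 | h1
    · rcases eq_or_ne d2 0 with h2 | h2
      · exfalso
        apply hd
        have e : q - q' = (d1, d2) := rfl
        rw [e, h1, h2]
        rfl
      · positivity
    · positivity
  obtain ⟨a, hza1, hza2⟩ : ∃ a : ℝ, z.1 = y.1 + a * (-d2) ∧ z.2 = y.2 + a * d1 := by
    refine ⟨((z.1 - y.1) * (-d2) + (z.2 - y.2) * d1) / (d1^2 + d2^2), ?_, ?_⟩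
    · rw [div_mul_eq_mul_div, eq_comm, add_comm, ← eq_sub_iff_add_eq, div_eq_iff hsq.ne']
      linear_combination (-d1) * hperp1
    · rw [div_mul_eq_mul_div, eq_comm, add_comm, ← eq_sub_iff_add_eq, div_eq_iff hsq.ne']
      linear_combination (-d2) * hperp1
  obtain ⟨b, hyb1, hyb2⟩ : ∃ b : ℝ, y'.1 = y.1 + b * (-d2) ∧ y'.2 = y.2 + b * d1 := by
    refine ⟨((y'.1 - y.1) * (-d2) + (y'.2 - y.2) * d1) / (d1^2 + d2^2), ?_, ?_⟩
    · rw [div_mul_eq_mul_div, eq_comm, add_comm, ← eq_sub_iff_add_eq, div_eq_iff hsq.ne']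
      linear_combination (-d1) * hperp2
    · rw [div_mul_eq_mul_div, eq_comm, add_comm, ← eq_sub_iff_add_eq, div_eq_iff hsq.ne']
      linear_combination (-d2) * hperp2
  have ha0 : a ≠ 0 := by
    intro h
    rw [h] at hza1 hza2
    simp only [zero_mul, add_zero] at hza1 hza2
    exact hyz (Prod.ext hza1.symm hza2.symm).symm.symm
  have hb0 : b ≠ 0 := by
    intro h
    rw [h] at hyb1 hyb2
    simp only [zero_mul, add_zero] at hyb1 hyb2
    exact hyy' (Prod.ext hyb1.symm hyb2.symm).symm.symm
  have haK : a^2 * (d1^2 + d2^2) = 2 * a * ((q.1 - y.1) * (-d2) + (q.2 - y.2) * d1) := by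
    rw [hza1, hza2] at sq1
    linear_combination -sq1
  have hbK : b^2 * (d1^2 + d2^2) = 2 * b * ((q.1 - y.1) * (-d2) + (q.2 - y.2) * d1) := by
    rw [hyb1, hyb2] at sq2'
    linear_combination -sq2'
  have haE : a * (d1^2 + d2^2) = 2 * ((q.1 - y.1) * (-d2) + (q.2 - y.2) * d1) := by
    have h1 : a * (a * (d1^2 + d2^2) - 2 * ((q.1 - y.1) * (-d2) + (q.2 - y.2) * d1)) = 0 := by
      linear_combination haK
    rcases mul_eq_zero.1 h1 with h | h
    · exact absurd h ha0
    · linarith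
  have hbE : b * (d1^2 + d2^2) = 2 * ((q.1 - y.1) * (-d2) + (q.2 - y.2) * d1) := by
    have h1 : b * (b * (d1^2 + d2^2) - 2 * ((q.1 - y.1) * (-d2) + (q.2 - y.2) * d1)) = 0 := by
      linear_combination hbK
    rcases mul_eq_zero.1 h1 with h | h
    · exact absurd h hb0
    · linarith
  have hab : a = b := by
    have h2 : a * (d1^2 + d2^2) = b * (d1^2 + d2^2) := by rw [haE, hbE]
    exact mul_right_cancel₀ hsq.ne' h2
  apply hzy'
  rw [hab] at hza1 hza2
  apply Prod.ext
  · rw [hza1, hyb1]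
  · rw [hza2, hyb2]


-- the set of "degenerate" points with three distinct nearest sites, within a ball, is finite
lemma bad_finite {P : Set (ℝ × ℝ)} (hP : LocFin P) {u : ℝ × ℝ} (hu : u ∈ P) (R : ℝ) :
    {c : ℝ × ℝ | eDist c u ≤ R ∧ ∃ y z y', (near P c y ∧ near P c z ∧ near P c y') ∧
      (y ≠ z ∧ y ≠ y' ∧ z ≠ y')}.Finite := by
  classical
  set F := P ∩ {z | eDist (0,0) z ≤ eDist (0,0) u + 2*R} with hF
  have hFfin : F.Finite := hP _
  have hsub : {c : ℝ × ℝ | eDist c u ≤ R ∧ ∃ y z y', (near P c y ∧ near P c z ∧ near P c y') ∧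
      (y ≠ z ∧ y ≠ y' ∧ z ≠ y')} ⊆
      ⋃ y ∈ F, ⋃ z ∈ F, ⋃ y' ∈ F,
        {c : ℝ × ℝ | (y ≠ z ∧ y ≠ y' ∧ z ≠ y') ∧ eDist c y = eDist c z ∧ eDist c y = eDist c y'} := by
    rintro c ⟨hcu, y, z, y', ⟨hy, hz, hy'⟩, hd⟩
    have hmem : ∀ {w : ℝ × ℝ}, near P c w → w ∈ F := by
      intro w hw
      have h1 : eDist c w ≤ R := le_trans (hw.2 u hu) hcu
      have h2 : eDist (0,0) w ≤ eDist (0,0) c + eDist c w := eDist_triangle _ _ _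
      have h3 : eDist (0,0) c ≤ eDist (0,0) u + eDist u c := eDist_triangle _ _ _
      have h4 : eDist u c = eDist c u := eDist_comm _ _
      have h5 : 0 ≤ eDist c w := eDist_nonneg _ _
      exact ⟨hw.1, by simp only [Set.mem_setOf_eq]; linarith⟩
    have heq1 : eDist c y = eDist c z := le_antisymm (hy.2 z hz.1) (hz.2 y hy.1)
    have heq2 : eDist c y = eDist c y' := le_antisymm (hy.2 y' hy'.1) (hy'.2 y hy.1)
    refine Set.mem_biUnion (hmem hy) (Set.mem_biUnion (hmem hz) (Set.mem_biUnion (hmem hy') ?_))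
    exact ⟨hd, heq1, heq2⟩
  apply Set.Finite.subset _ hsub
  refine hFfin.biUnion fun y _ => hFfin.biUnion fun z _ => hFfin.biUnion fun y' _ => ?_
  by_cases hd : y ≠ z ∧ y ≠ y' ∧ z ≠ y'
  · apply Set.Finite.subset ((equidistant_subsingleton hd.1 hd.2.1 hd.2.2).finite)
    rintro c ⟨_, hc⟩
    exact hc
  · apply Set.Finite.subset (Set.finite_empty)
    rintro c ⟨hd', _⟩
    exact absurd hd' hd

-- scalar helper: uniqueness of the offset parameter
lemma line_param_subsingleton {w1 w2 n1 n2 β1 β2 : ℝ}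
    (hW : 0 < w1^2 + w2^2) (hN : 0 < n1^2 + n2^2) (horth : w1*n1 + w2*n2 = 0) :
    Set.Subsingleton {c : ℝ | ∃ t : ℝ, 0 < t ∧ t ≤ 1 ∧
      t*(w1/2 + c*n1) = β1 ∧ t*(w2/2 + c*n2) = β2} := by
  rintro c ⟨t, ht0, _, E1, E2⟩ c' ⟨t', ht0', _, E1', E2'⟩
  have hT : t*(w1^2 + w2^2)/2 = β1*w1 + β2*w2 := by
    linear_combination w1*E1 + w2*E2 - (t*c)*horth
  have hT' : t'*(w1^2 + w2^2)/2 = β1*w1 + β2*w2 := by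
    linear_combination w1*E1' + w2*E2' - (t'*c')*horth
  have htt : t = t' := by
    have h1 : (t - t')*(w1^2 + w2^2) = 0 := by linear_combination 2*hT - 2*hT'
    rcases mul_eq_zero.1 h1 with h | h
    · linarith
    · exact absurd h hW.ne'
  have hC : t*c*(n1^2 + n2^2) = β1*n1 + β2*n2 := by
    linear_combination n1*E1 + n2*E2 - (t/2)*horth
  have hC' : t'*c'*(n1^2 + n2^2) = β1*n1 + β2*n2 := by
    linear_combination n1*E1' + n2*E2' - (t'/2)*horth
  have h1 : (c - c')*(t'*(n1^2 + n2^2)) = 0 := by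
    rw [htt] at hC
    linear_combination hC - hC'
  rcases mul_eq_zero.1 h1 with h | h
  · linarith
  · exact absurd h (by positivity)

-- choose a bent midpoint avoiding a finite bad set from both viewpoints
lemma choose_corner {B : Set (ℝ × ℝ)} (hB : B.Finite) {u v : ℝ × ℝ} (huv : u ≠ v)
    {ε : ℝ} (hε : 0 < ε) :
    ∃ m : ℝ × ℝ, eDist (u + (1/2 : ℝ) • (v - u)) m ≤ ε ∧
      (∀ t : ℝ, 0 < t → t ≤ 1 → u + t • (m - u) ∉ B) ∧
      (∀ t : ℝ, 0 < t → t ≤ 1 → v + t • (m - v) ∉ B) := by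
  classical
  set w : ℝ × ℝ := v - u with hw
  have hw1 : w.1 = v.1 - u.1 := rfl
  have hw2 : w.2 = v.2 - u.2 := rfl
  have hW : 0 < w.1^2 + w.2^2 := by
    rcases eq_or_ne w.1 0 with h1 | h1
    · rcases eq_or_ne w.2 0 with h2 | h2
      · exfalso
        apply huv
        apply Prod.ext
        · rw [hw1] at h1; linarith
        · rw [hw2] at h2; linarith
      · positivity
    · positivity
  set n : ℝ × ℝ := (-w.2, w.1) with hn
  have hn1 : n.1 = -w.2 := rfl
  have hn2 : n.2 = w.1 := rfl
  have hN : 0 < n.1^2 + n.2^2 := by rw [hn1, hn2]; nlinarith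
  set mid : ℝ × ℝ := u + (1/2 : ℝ) • w with hmid
  have hmid1 : mid.1 = u.1 + (1/2) * w.1 := rfl
  have hmid2 : mid.2 = u.2 + (1/2) * w.2 := rfl
  set Ln := Real.sqrt (n.1^2 + n.2^2) with hLn
  have hLn0 : 0 < Ln := Real.sqrt_pos.2 hN
  -- bad parameter sets
  set S1 : ℝ × ℝ → Set ℝ := fun b => {c : ℝ | ∃ t : ℝ, 0 < t ∧ t ≤ 1 ∧
    t*(w.1/2 + c*n.1) = b.1 - u.1 ∧ t*(w.2/2 + c*n.2) = b.2 - u.2} with hS1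
  set S2 : ℝ × ℝ → Set ℝ := fun b => {c : ℝ | ∃ t : ℝ, 0 < t ∧ t ≤ 1 ∧
    t*((-w.1)/2 + c*n.1) = b.1 - v.1 ∧ t*((-w.2)/2 + c*n.2) = b.2 - v.2} with hS2
  have hS1fin : ∀ b, (S1 b).Finite := by
    intro b
    apply Set.Subsingleton.finite
    exact line_param_subsingleton hW hN (by rw [hn1, hn2]; ring)
  have hS2fin : ∀ b, (S2 b).Finite := by
    intro b
    apply Set.Subsingleton.finite
    apply line_param_subsingleton (by nlinarith : (0:ℝ) < (-w.1)^2 + (-w.2)^2) hN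
    rw [hn1, hn2]; ring
  set bad : Set ℝ := (⋃ b ∈ B, S1 b) ∪ (⋃ b ∈ B, S2 b) with hbad
  have hbadfin : bad.Finite :=
    ((hB.biUnion fun b _ => hS1fin b).union (hB.biUnion fun b _ => hS2fin b))
  have hIoc : (Set.Ioc (0:ℝ) (ε / Ln)).Infinite := Set.Ioc_infinite (by positivity)
  obtain ⟨c, hc⟩ := (hIoc.diff hbadfin).nonempty
  have hc1 : 0 < c := hc.1.1
  have hc2 : c ≤ ε / Ln := hc.1.2
  have hcbad : c ∉ bad := hc.2
  refine ⟨mid + c • n, ?_, ?_, ?_⟩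
  · -- distance bound
    have e0 : mid + (0:ℝ) • n = mid := by rw [zero_smul, add_zero]
    have e := eDist_line mid n (0:ℝ) c
    rw [e0] at e
    have : eDist mid (mid + c • n) = c * Ln := by
      rw [e, zero_sub, abs_neg, abs_of_nonneg hc1.le, hLn]
    have egoal : eDist (u + (1/2 : ℝ) • (v - u)) (mid + c • n) = eDist mid (mid + c • n) := rfl
    rw [egoal, this]
    calc c * Ln ≤ (ε / Ln) * Ln := mul_le_mul_of_nonneg_right hc2 hLn0.le
      _ = ε := by field_simp
  · -- segment from u avoids B
    intro t ht0 ht1 hmem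
    apply hcbad
    apply Set.mem_union_left
    refine Set.mem_biUnion hmem ?_
    refine ⟨t, ht0, ht1, ?_, ?_⟩
    · have e : (u + t • (mid + c • n - u)).1 = u.1 + t*(w.1/2 + c*n.1) := by
        show u.1 + t * (u.1 + 1/2 * w.1 + c * n.1 - u.1) = u.1 + t*(w.1/2 + c*n.1)
        ring
      rw [e]; ring
    · have e : (u + t • (mid + c • n - u)).2 = u.2 + t*(w.2/2 + c*n.2) := by
        show u.2 + t * (u.2 + 1/2 * w.2 + c * n.2 - u.2) = u.2 + t*(w.2/2 + c*n.2)
        ring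
      rw [e]; ring
  · -- segment from v avoids B
    intro t ht0 ht1 hmem
    apply hcbad
    apply Set.mem_union_right
    refine Set.mem_biUnion hmem ?_
    refine ⟨t, ht0, ht1, ?_, ?_⟩
    · have e : (v + t • (mid + c • n - v)).1 = v.1 + t*((-w.1)/2 + c*n.1) := by
        show v.1 + t * (u.1 + 1/2 * w.1 + c * n.1 - v.1) = v.1 + t*((-w.1)/2 + c*n.1)
        rw [hw1]; ring
      rw [e]; ring
    · have e : (v + t • (mid + c • n - v)).2 = v.2 + t*((-w.2)/2 + c*n.2) := by
        show v.2 + t * (u.2 + 1/2 * w.2 + c * n.2 - v.2) = v.2 + t*((-w.2)/2 + c*n.2)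
        rw [hw2]; ring
      rw [e]; ring


lemma count_square {P : Set (ℝ × ℝ)} {x : ℝ × ℝ} {s A : ℝ} (hs : 0 < s)
    (hA : ARed P x s A) :
    (P ∩ square x s).Finite ∧ ((P ∩ square x s).ncard : ℝ) ≤ 400 * (A * s^2) := by
  classical
  set T : Finset (ℝ × ℝ) :=
    Finset.univ.biUnion (fun ij : Fin 20 × Fin 20 => ((hA ij.1 ij.2).2.1).toFinset) with hT
  have hsub : P ∩ square x s ⊆ ↑T := by
    rintro q ⟨hqP, hqsq⟩
    obtain ⟨i, j, hij⟩ := square_mem_subsq hs hqsq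
    simp only [hT, Finset.coe_biUnion, Finset.mem_coe, Finset.mem_univ, Set.mem_iUnion,
      Set.Finite.mem_toFinset]
    exact ⟨(i, j), trivial, hqP, hij⟩
  have hfin : (P ∩ square x s).Finite := T.finite_toSet.subset hsub
  refine ⟨hfin, ?_⟩
  have h1 : (P ∩ square x s).ncard ≤ T.card := by
    have := Set.ncard_le_ncard hsub T.finite_toSet
    rwa [Set.ncard_coe_finset] at this
  have h2 : T.card ≤ ∑ ij : Fin 20 × Fin 20, ((hA ij.1 ij.2).2.1).toFinset.card :=
    Finset.card_biUnion_le
  have h3 : ∀ ij : Fin 20 × Fin 20, (((hA ij.1 ij.2).2.1).toFinset.card : ℝ) ≤ A * s^2 := by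
    intro ij
    have := (hA ij.1 ij.2).2.2
    rwa [Set.ncard_eq_toFinset_card _ ((hA ij.1 ij.2).2.1)] at this
  have h4 : ((∑ ij : Fin 20 × Fin 20, ((hA ij.1 ij.2).2.1).toFinset.card : ℕ) : ℝ)
      ≤ 400 * (A * s^2) := by
    push_cast
    calc (∑ ij : Fin 20 × Fin 20, (((hA ij.1 ij.2).2.1).toFinset.card : ℝ))
        ≤ ∑ _ij : Fin 20 × Fin 20, (A * s^2) := Finset.sum_le_sum (fun ij _ => h3 ij)
      _ = 400 * (A * s^2) := by
          rw [Finset.sum_const]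
          simp only [Finset.card_univ]
          have : Fintype.card (Fin 20 × Fin 20) = 400 := by simp
          rw [this]
          push_cast
          ring
  calc ((P ∩ square x s).ncard : ℝ) ≤ (T.card : ℝ) := by exact_mod_cast h1
    _ ≤ _ := by exact_mod_cast le_trans (by exact_mod_cast h2) h4

lemma one_le_As2 {P : Set (ℝ × ℝ)} {x : ℝ × ℝ} {s A : ℝ} (hA : ARed P x s A) :
    (1:ℝ) ≤ A * s^2 := by
  have h := hA 0 0
  have h1 : 0 < (P ∩ subsq x s 0 0).ncard := (Set.ncard_pos h.2.1).2 h.1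
  have h2 : (1:ℝ) ≤ ((P ∩ subsq x s 0 0).ncard : ℝ) := by exact_mod_cast h1
  linarith [h.2.2]



lemma eDist_shift (z y y' : ℝ × ℝ) (t : ℝ) :
    eDist (z + t • y) (z + t • y') = |t| * eDist y y' := by
  unfold eDist
  have e : (z.1 + t*y.1 - (z.1 + t*y'.1))^2 + (z.2 + t*y.2 - (z.2 + t*y'.2))^2
      = t^2 * ((y.1 - y'.1)^2 + (y.2 - y'.2)^2) := by ring
  show Real.sqrt ((z.1 + t*y.1 - (z.1 + t*y'.1))^2 + (z.2 + t*y.2 - (z.2 + t*y'.2))^2) = _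
  rw [e, Real.sqrt_mul (sq_nonneg _), Real.sqrt_sq_eq_abs]

lemma eDist_add_cancel (x y dd : ℝ × ℝ) : eDist x (x + dd) = eDist y (y + dd) := by
  unfold eDist
  congr 1
  show (x.1 - (x.1 + dd.1))^2 + (x.2 - (x.2 + dd.2))^2
      = (y.1 - (y.1 + dd.1))^2 + (y.2 - (y.2 + dd.2))^2
  ring

lemma eDist_scale {x y : ℝ × ℝ} {σ : ℝ} (h : 0 ≤ σ) :
    eDist x (x + σ • (y - x)) = σ * eDist x y := by
  have e0 : x + (0:ℝ) • (y - x) = x := by rw [zero_smul, add_zero]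
  have e := eDist_line x (y - x) (0:ℝ) σ
  rw [e0] at e
  rw [e, zero_sub, abs_neg, abs_of_nonneg h]
  congr 1
  unfold eDist
  congr 1
  show (y.1 - x.1)^2 + (y.2 - x.2)^2 = (x.1 - y.1)^2 + (x.2 - y.2)^2
  ring

/-- Lemma 4.2 of the paper: if two adjacent boxes of `sℤ²` are
`A`-red, then any two points of `Π` in subsquares of `ℛ = Λ_s(x) ∪ Λ_s(y)` lying at
distance at least `s/4` from `∂ℛ` are joined by a path of the Delaunay triangulation
with at most `800As²` vertices, lying entirely (vertices and straight edges) in `ℛ`. -/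
theorem statement_8 :
    ∀ P : Set (ℝ × ℝ), LocFin P →
    ∀ s A : ℝ, 0 < s → 0 < A →
    ∀ a b : ℤ × ℤ, (a.1 - b.1).natAbs + (a.2 - b.2).natAbs = 1 →
    ARed P (s * (a.1 : ℝ), s * (a.2 : ℝ)) s A →
    ARed P (s * (b.1 : ℝ), s * (b.2 : ℝ)) s A →
    ∀ (x' y' : ℝ × ℝ) (i₁ j₁ i₂ j₂ : Fin 20),
      (x' = (s * (a.1 : ℝ), s * (a.2 : ℝ)) ∨ x' = (s * (b.1 : ℝ), s * (b.2 : ℝ))) →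
      (y' = (s * (a.1 : ℝ), s * (a.2 : ℝ)) ∨ y' = (s * (b.1 : ℝ), s * (b.2 : ℝ))) →
      -- the two subsquares lie at Euclidean distance at least `s/4` from `∂ℛ`
      (∀ p ∈ subsq x' s i₁ j₁,
        ∀ q ∈ frontier (square (s * (a.1 : ℝ), s * (a.2 : ℝ)) s ∪
                        square (s * (b.1 : ℝ), s * (b.2 : ℝ)) s), s/4 ≤ eDist p q) →
      (∀ p ∈ subsq y' s i₂ j₂,
        ∀ q ∈ frontier (square (s * (a.1 : ℝ), s * (a.2 : ℝ)) s ∪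
                        square (s * (b.1 : ℝ), s * (b.2 : ℝ)) s), s/4 ≤ eDist p q) →
      ∀ u ∈ P ∩ subsq x' s i₁ j₁, ∀ v ∈ P ∩ subsq y' s i₂ j₂,
        ∃ w : (delaunay P).Walk u v, w.IsPath ∧
          ((w.support.length : ℝ) ≤ 800 * A * s^2) ∧
          (∀ z ∈ w.support,
            z ∈ square (s * (a.1 : ℝ), s * (a.2 : ℝ)) s ∪
                square (s * (b.1 : ℝ), s * (b.2 : ℝ)) s) ∧
          (∀ p q : ℝ × ℝ, s(p, q) ∈ w.edges →
            segment ℝ p q ⊆ square (s * (a.1 : ℝ), s * (a.2 : ℝ)) s ∪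
                            square (s * (b.1 : ℝ), s * (b.2 : ℝ)) s) := by
  classical
  intro P hLF s A hs hApos a b hab hARa hARb x' y' i₁ j₁ i₂ j₂ hx' hy' hQ1 hQ2 u hu v hv
  set X : ℝ × ℝ := (s * (a.1 : ℝ), s * (a.2 : ℝ)) with hX
  set Y : ℝ × ℝ := (s * (b.1 : ℝ), s * (b.2 : ℝ)) with hY
  set R : Set (ℝ × ℝ) := square X s ∪ square Y s with hR
  obtain ⟨huP, huQ⟩ := hu
  obtain ⟨hvP, hvQ⟩ := hv
  -- convexity of R
  have hcase : (a.1 = b.1 + 1 ∧ a.2 = b.2) ∨ (b.1 = a.1 + 1 ∧ a.2 = b.2) ∨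
      (a.2 = b.2 + 1 ∧ a.1 = b.1) ∨ (b.2 = a.2 + 1 ∧ a.1 = b.1) := by omega
  have hconv : Convex ℝ R := by
    rcases hcase with ⟨h1, h2⟩ | ⟨h1, h2⟩ | ⟨h1, h2⟩ | ⟨h1, h2⟩
    · have e : X = Y + (s, 0) := by
        have c1 : (a.1 : ℝ) = (b.1 : ℝ) + 1 := by exact_mod_cast h1
        have c2 : (a.2 : ℝ) = (b.2 : ℝ) := by exact_mod_cast h2
        apply Prod.ext
        · show s * (a.1 : ℝ) = s * (b.1 : ℝ) + s
          rw [c1]; ring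
        · show s * (a.2 : ℝ) = s * (b.2 : ℝ) + 0
          rw [c2]; ring
      rw [hR, e, Set.union_comm]
      exact convex_union_horiz Y hs
    · have e : Y = X + (s, 0) := by
        have c1 : (b.1 : ℝ) = (a.1 : ℝ) + 1 := by exact_mod_cast h1
        have c2 : (a.2 : ℝ) = (b.2 : ℝ) := by exact_mod_cast h2
        apply Prod.ext
        · show s * (b.1 : ℝ) = s * (a.1 : ℝ) + s
          rw [c1]; ring
        · show s * (b.2 : ℝ) = s * (a.2 : ℝ) + 0
          rw [c2]; ring
      rw [hR, e]
      exact convex_union_horiz X hs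
    · have e : X = Y + (0, s) := by
        have c1 : (a.2 : ℝ) = (b.2 : ℝ) + 1 := by exact_mod_cast h1
        have c2 : (a.1 : ℝ) = (b.1 : ℝ) := by exact_mod_cast h2
        apply Prod.ext
        · show s * (a.1 : ℝ) = s * (b.1 : ℝ) + 0
          rw [c2]; ring
        · show s * (a.2 : ℝ) = s * (b.2 : ℝ) + s
          rw [c1]; ring
      rw [hR, e, Set.union_comm]
      exact convex_union_vert Y hs
    · have e : Y = X + (0, s) := by
        have c1 : (b.2 : ℝ) = (a.2 : ℝ) + 1 := by exact_mod_cast h1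
        have c2 : (a.1 : ℝ) = (b.1 : ℝ) := by exact_mod_cast h2
        apply Prod.ext
        · show s * (b.1 : ℝ) = s * (a.1 : ℝ) + 0
          rw [c2]; ring
        · show s * (b.2 : ℝ) = s * (a.2 : ℝ) + s
          rw [c1]; ring
      rw [hR, e]
      exact convex_union_vert X hs
  -- nets and membership
  have hRnet : ∀ q ∈ R, ∃ y ∈ P, eDist q y ≤ 0.15 * s := by
    rintro q (hq | hq)
    · exact square_net hs hARa hq
    · exact square_net hs hARb hq
  have huR : u ∈ R := by
    rcases hx' with h | h
    · exact Or.inl (subsq_subset_square hs i₁ j₁ (h ▸ huQ))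
    · exact Or.inr (subsq_subset_square hs i₁ j₁ (h ▸ huQ))
  have hvR : v ∈ R := by
    rcases hy' with h | h
    · exact Or.inl (subsq_subset_square hs i₂ j₂ (h ▸ hvQ))
    · exact Or.inr (subsq_subset_square hs i₂ j₂ (h ▸ hvQ))
  have hballu : ∀ q : ℝ × ℝ, eDist u q < s/4 → q ∈ R :=
    fun q hq => ball_subset huR (hQ1 u huQ) hq
  have hballv : ∀ q : ℝ × ℝ, eDist v q < s/4 → q ∈ R :=
    fun q hq => ball_subset hvR (hQ2 v hvQ) hq
  -- deep tube around the segment [u, v] lies in R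
  have hdeep : ∀ (w : ℝ × ℝ) (σ : ℝ), 0 ≤ σ → σ ≤ 1 →
      eDist (u + σ • (v - u)) w ≤ 0.2 * s → w ∈ R := by
    intro w σ hσ0 hσ1 hw
    have hpd : u + σ • (v - u) + (w - (u + σ • (v - u))) = w := by abel
    have hu1 : eDist u (u + (w - (u + σ • (v - u)))) = eDist (u + σ • (v - u)) w := by
      rw [eDist_add_cancel u (u + σ • (v - u)) (w - (u + σ • (v - u))), hpd]
    have hv1 : eDist v (v + (w - (u + σ • (v - u)))) = eDist (u + σ • (v - u)) w := by
      rw [eDist_add_cancel v (u + σ • (v - u)) (w - (u + σ • (v - u))), hpd]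
    have huin : u + (w - (u + σ • (v - u))) ∈ R := by
      apply hballu
      rw [hu1]
      linarith
    have hvin : v + (w - (u + σ • (v - u))) ∈ R := by
      apply hballv
      rw [hv1]
      linarith
    have combo : w = (1-σ) • (u + (w - (u + σ • (v - u)))) + σ • (v + (w - (u + σ • (v - u)))) := by
      apply Prod.ext
      · show w.1 = (1-σ) * (u.1 + (w.1 - (u.1 + σ * (v.1 - u.1))))
            + σ * (v.1 + (w.1 - (u.1 + σ * (v.1 - u.1))))
        ring
      · show w.2 = (1-σ) * (u.2 + (w.2 - (u.2 + σ * (v.2 - u.2))))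
            + σ * (v.2 + (w.2 - (u.2 + σ * (v.2 - u.2))))
        ring
    rw [combo]
    exact hconv huin hvin (by linarith) hσ0 (by ring)
  have h800 : (1:ℝ) ≤ 800 * A * s^2 := by
    have h1 := one_le_As2 hARa
    nlinarith
  -- trivial case u = v
  rcases eq_or_ne u v with rfl | huv
  · refine ⟨SimpleGraph.Walk.nil, SimpleGraph.Walk.IsPath.nil, ?_, ?_, ?_⟩
    · rw [SimpleGraph.Walk.support_nil]
      simpa using h800
    · intro z hz
      rw [SimpleGraph.Walk.support_nil] at hz
      rcases List.mem_singleton.1 hz with rfl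
      exact huR
    · intro p q hpq
      rw [SimpleGraph.Walk.edges_nil] at hpq
      exact absurd hpq List.not_mem_nil
  -- main case : u ≠ v
  set Bset : Set (ℝ × ℝ) := {c : ℝ × ℝ | eDist c u ≤ eDist u v + s ∧
    ∃ y z y', (near P c y ∧ near P c z ∧ near P c y') ∧ (y ≠ z ∧ y ≠ y' ∧ z ≠ y')} with hBset
  have hBfin : Bset.Finite := bad_finite hLF huP (eDist u v + s)
  obtain ⟨m, hm1, hseg1, hseg2⟩ := choose_corner hBfin huv (ε := 0.01*s) (by positivity)
  -- every point of either bent segment is 0.01 s close to the straight segment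
  have L1 : ∀ τ : ℝ, 0 ≤ τ → τ ≤ 1 → ∃ σ : ℝ, 0 ≤ σ ∧ σ ≤ 1 ∧
      eDist (u + σ • (v - u)) (u + τ • (m - u)) ≤ 0.01*s := by
    intro τ h0 h1
    refine ⟨τ/2, by linarith, by linarith, ?_⟩
    have e1 : u + (τ/2) • (v - u) = u + τ • ((u + (1/2 : ℝ) • (v - u)) - u) := by
      apply Prod.ext
      · show u.1 + (τ/2) * (v.1 - u.1) = u.1 + τ * ((u.1 + (1/2) * (v.1 - u.1)) - u.1)
        ring
      · show u.2 + (τ/2) * (v.2 - u.2) = u.2 + τ * ((u.2 + (1/2) * (v.2 - u.2)) - u.2)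
        ring
    rw [e1, eDist_shift]
    have e2 : eDist ((u + (1/2 : ℝ) • (v - u)) - u) (m - u)
        = eDist (u + (1/2 : ℝ) • (v - u)) m := by
      have h := eDist_translate ((u + (1/2 : ℝ) • (v - u)) - u) (m - u) u
      rw [sub_add_cancel, sub_add_cancel] at h
      exact h.symm
    rw [e2]
    have habs : |τ| ≤ 1 := by rw [abs_of_nonneg h0]; exact h1
    have hnn := eDist_nonneg (u + (1/2 : ℝ) • (v - u)) m
    nlinarith [hm1]
  have L2 : ∀ τ : ℝ, 0 ≤ τ → τ ≤ 1 → ∃ σ : ℝ, 0 ≤ σ ∧ σ ≤ 1 ∧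
      eDist (u + σ • (v - u)) (m + τ • (v - m)) ≤ 0.01*s := by
    intro τ h0 h1
    refine ⟨1/2 + τ/2, by linarith, by linarith, ?_⟩
    have e1 : u + (1/2 + τ/2) • (v - u) = τ • v + (1-τ) • (u + (1/2 : ℝ) • (v - u)) := by
      apply Prod.ext
      · show u.1 + (1/2 + τ/2) * (v.1 - u.1) = τ * v.1 + (1-τ) * (u.1 + (1/2) * (v.1 - u.1))
        ring
      · show u.2 + (1/2 + τ/2) * (v.2 - u.2) = τ * v.2 + (1-τ) * (u.2 + (1/2) * (v.2 - u.2))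
        ring
    have e2 : m + τ • (v - m) = τ • v + (1-τ) • m := by
      apply Prod.ext
      · show m.1 + τ * (v.1 - m.1) = τ * v.1 + (1-τ) * m.1
        ring
      · show m.2 + τ * (v.2 - m.2) = τ * v.2 + (1-τ) * m.2
        ring
    rw [e1, e2, eDist_shift]
    have habs : |1-τ| ≤ 1 := by rw [abs_of_nonneg (by linarith)]; linarith
    have hnn := eDist_nonneg (u + (1/2 : ℝ) • (v - u)) m
    nlinarith [hm1]
  -- points close to the straight segment are close to u
  have HB : ∀ c : ℝ × ℝ, (∃ σ : ℝ, 0 ≤ σ ∧ σ ≤ 1 ∧ eDist (u + σ • (v - u)) c ≤ 0.01*s) →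
      eDist c u ≤ eDist u v + s := by
    rintro c ⟨σ, h0, h1, hd⟩
    have h2 : eDist u (u + σ • (v - u)) = σ * eDist u v := eDist_scale h0
    have h3 : eDist c u = eDist u c := eDist_comm _ _
    have tri : eDist u c ≤ eDist u (u + σ • (v - u)) + eDist (u + σ • (v - u)) c :=
      eDist_triangle _ _ _
    have h4 : σ * eDist u v ≤ eDist u v := by nlinarith [eDist_nonneg u v]
    rw [h3]
    linarith
  -- the hypotheses of walkseg, first segment
  have Hρ1 : ∀ τ ∈ Set.Icc (0:ℝ) 1, ∃ y ∈ P, eDist (u + τ • (m - u)) y ≤ 0.15*s := by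
    intro τ hτ
    obtain ⟨σ, h0, h1, hd⟩ := L1 τ hτ.1 hτ.2
    exact hRnet _ (hdeep _ σ h0 h1 (by linarith))
  have H2seg1 : ∀ τ : ℝ, 0 ≤ τ → τ < 1 → ∀ y z y', near P (u + τ • (m - u)) y →
      near P (u + τ • (m - u)) z → near P (u + τ • (m - u)) y' →
      y = z ∨ y = y' ∨ z = y' := by
    intro τ h0 h1 y z y' hy hz hy'
    by_contra hcon
    push_neg at hcon
    rcases eq_or_lt_of_le h0 with heq | hpos
    · have e0 : u + τ • (m - u) = u := by rw [← heq, zero_smul, add_zero]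
      rw [e0] at hy hz
      exact hcon.1 ((near_at_self huP hy).trans (near_at_self huP hz).symm)
    · refine hseg1 τ hpos h1.le ?_
      exact ⟨HB _ (L1 τ h0 h1.le), y, z, y', ⟨hy, hz, hy'⟩, hcon.1, hcon.2.1, hcon.2.2⟩
  -- the hypotheses of walkseg, second segment
  have Hρ2 : ∀ τ ∈ Set.Icc (0:ℝ) 1, ∃ y ∈ P, eDist (m + τ • (v - m)) y ≤ 0.15*s := by
    intro τ hτ
    obtain ⟨σ, h0, h1, hd⟩ := L2 τ hτ.1 hτ.2
    exact hRnet _ (hdeep _ σ h0 h1 (by linarith))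
  have H2seg2 : ∀ τ : ℝ, 0 ≤ τ → τ < 1 → ∀ y z y', near P (m + τ • (v - m)) y →
      near P (m + τ • (v - m)) z → near P (m + τ • (v - m)) y' →
      y = z ∨ y = y' ∨ z = y' := by
    intro τ h0 h1 y z y' hy hz hy'
    by_contra hcon
    push_neg at hcon
    have hmem : m + τ • (v - m) ∉ Bset := by
      rcases eq_or_lt_of_le h0 with heq | hpos
      · have e0 : m + τ • (v - m) = u + (1:ℝ) • (m - u) := by
          apply Prod.ext
          · show m.1 + τ * (v.1 - m.1) = u.1 + 1 * (m.1 - u.1)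
            rw [← heq]; ring
          · show m.2 + τ * (v.2 - m.2) = u.2 + 1 * (m.2 - u.2)
            rw [← heq]; ring
        rw [e0]
        exact hseg1 1 one_pos (le_refl 1)
      · have e0 : m + τ • (v - m) = v + (1-τ) • (m - v) := by
          apply Prod.ext
          · show m.1 + τ * (v.1 - m.1) = v.1 + (1-τ) * (m.1 - v.1)
            ring
          · show m.2 + τ * (v.2 - m.2) = v.2 + (1-τ) * (m.2 - v.2)
            ring
        rw [e0]
        exact hseg2 (1-τ) (by linarith) (by linarith)
    exact hmem ⟨HB _ (L2 τ h0 h1.le), y, z, y', ⟨hy, hz, hy'⟩, hcon.1, hcon.2.1, hcon.2.2⟩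
  -- run the two walks
  obtain ⟨wm, hwm, W1, hW1s, hW1e⟩ := walkseg hLF u (m - u) (0.15*s) Hρ1 H2seg1 (near_self huP)
  have em : u + (m - u) = m := by abel
  rw [em] at hwm
  obtain ⟨v₁, hv₁, W2, hW2s, hW2e⟩ := walkseg hLF m (v - m) (0.15*s) Hρ2 H2seg2 hwm
  have ev : m + (v - m) = v := by abel
  rw [ev] at hv₁
  have hv₁v : v₁ = v := near_at_self hvP hv₁
  subst v₁
  set W := W1.append W2 with hW
  -- support and edge containment in R
  have hWs : ∀ z ∈ W.support, z ∈ P ∧ z ∈ R := by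
    intro z hz
    rw [hW, SimpleGraph.Walk.support_append] at hz
    rcases List.mem_append.1 hz with hz | hz
    · obtain ⟨hzP, τ, hτ, hdist⟩ := hW1s z hz
      obtain ⟨σ, h0, h1, hd⟩ := L1 τ hτ.1 hτ.2
      refine ⟨hzP, hdeep z σ h0 h1 ?_⟩
      have tri : eDist (u + σ • (v - u)) z
          ≤ eDist (u + σ • (v - u)) (u + τ • (m - u)) + eDist (u + τ • (m - u)) z :=
        eDist_triangle _ _ _
      linarith
    · have hz2 : z ∈ W2.support := List.mem_of_mem_tail hz
      obtain ⟨hzP, τ, hτ, hdist⟩ := hW2s z hz2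
      obtain ⟨σ, h0, h1, hd⟩ := L2 τ hτ.1 hτ.2
      refine ⟨hzP, hdeep z σ h0 h1 ?_⟩
      have tri : eDist (u + σ • (v - u)) z
          ≤ eDist (u + σ • (v - u)) (m + τ • (v - m)) + eDist (m + τ • (v - m)) z :=
        eDist_triangle _ _ _
      linarith
  have hWe : ∀ p q : ℝ × ℝ, s(p, q) ∈ W.edges → segment ℝ p q ⊆ R := by
    intro p q hpq
    rw [hW, SimpleGraph.Walk.edges_append] at hpq
    rcases List.mem_append.1 hpq with h | h
    · obtain ⟨τ, hτ, hp, hq⟩ := hW1e p q h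
      obtain ⟨σ, h0, h1, hd⟩ := L1 τ hτ.1 hτ.2
      rintro x ⟨μ, ν, hμ, hν, hμν, rfl⟩
      apply hdeep _ σ h0 h1
      have hcomb : eDist (μ • p + ν • q) (u + τ • (m - u))
          ≤ μ * eDist p (u + τ • (m - u)) + ν * eDist q (u + τ • (m - u)) :=
        eDist_combo_le hμ hν hμν
      have hp' : eDist p (u + τ • (m - u)) ≤ 0.15*s := by
        rw [eDist_comm]; exact hp
      have hq' : eDist q (u + τ • (m - u)) ≤ 0.15*s := by
        rw [eDist_comm]; exact hq
      have tri : eDist (u + σ • (v - u)) (μ • p + ν • q)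
          ≤ eDist (u + σ • (v - u)) (u + τ • (m - u)) + eDist (u + τ • (m - u)) (μ • p + ν • q) :=
        eDist_triangle _ _ _
      have hcc : eDist (u + τ • (m - u)) (μ • p + ν • q)
          = eDist (μ • p + ν • q) (u + τ • (m - u)) := eDist_comm _ _
      nlinarith [mul_le_mul_of_nonneg_left hp' hμ, mul_le_mul_of_nonneg_left hq' hν]
    · obtain ⟨τ, hτ, hp, hq⟩ := hW2e p q h
      obtain ⟨σ, h0, h1, hd⟩ := L2 τ hτ.1 hτ.2
      rintro x ⟨μ, ν, hμ, hν, hμν, rfl⟩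
      apply hdeep _ σ h0 h1
      have hcomb : eDist (μ • p + ν • q) (m + τ • (v - m))
          ≤ μ * eDist p (m + τ • (v - m)) + ν * eDist q (m + τ • (v - m)) :=
        eDist_combo_le hμ hν hμν
      have hp' : eDist p (m + τ • (v - m)) ≤ 0.15*s := by
        rw [eDist_comm]; exact hp
      have hq' : eDist q (m + τ • (v - m)) ≤ 0.15*s := by
        rw [eDist_comm]; exact hq
      have tri : eDist (u + σ • (v - u)) (μ • p + ν • q)
          ≤ eDist (u + σ • (v - u)) (m + τ • (v - m)) + eDist (m + τ • (v - m)) (μ • p + ν • q) :=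
        eDist_triangle _ _ _
      have hcc : eDist (m + τ • (v - m)) (μ • p + ν • q)
          = eDist (μ • p + ν • q) (m + τ • (v - m)) := eDist_comm _ _
      nlinarith [mul_le_mul_of_nonneg_left hp' hμ, mul_le_mul_of_nonneg_left hq' hν]
  -- counting
  obtain ⟨hfinX, hcardX⟩ := count_square hs hARa
  obtain ⟨hfinY, hcardY⟩ := count_square hs hARb
  have hPRfin : (P ∩ R).Finite := by
    rw [hR, Set.inter_union_distrib_left]
    exact hfinX.union hfinY
  have hPRcard : ((P ∩ R).ncard : ℝ) ≤ 800 * A * s^2 := by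
    have h1 : (P ∩ R).ncard ≤ (P ∩ square X s).ncard + (P ∩ square Y s).ncard := by
      rw [hR, Set.inter_union_distrib_left]
      exact Set.ncard_union_le _ _
    have h2 : (((P ∩ R).ncard : ℕ) : ℝ)
        ≤ ((P ∩ square X s).ncard : ℝ) + ((P ∩ square Y s).ncard : ℝ) := by
      exact_mod_cast h1
    nlinarith [hcardX, hcardY]
  refine ⟨W.bypass, SimpleGraph.Walk.bypass_isPath W, ?_, ?_, ?_⟩
  · -- length bound
    have hnodup : W.bypass.support.Nodup := (SimpleGraph.Walk.bypass_isPath W).support_nodup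
    have hsubs : W.bypass.support.toFinset ⊆ hPRfin.toFinset := by
      intro z hz
      rw [List.mem_toFinset] at hz
      rw [Set.Finite.mem_toFinset]
      have hzW := SimpleGraph.Walk.support_bypass_subset W hz
      obtain ⟨h1, h2⟩ := hWs z hzW
      exact ⟨h1, h2⟩
    have hlen : W.bypass.support.length = W.bypass.support.toFinset.card :=
      (List.toFinset_card_of_nodup hnodup).symm
    have hcard2 : W.bypass.support.toFinset.card ≤ hPRfin.toFinset.card :=
      Finset.card_le_card hsubs
    have hcard3 : hPRfin.toFinset.card = (P ∩ R).ncard :=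
      (Set.ncard_eq_toFinset_card _ hPRfin).symm
    have hfin : (W.bypass.support.length : ℝ) ≤ ((P ∩ R).ncard : ℝ) := by
      rw [hlen]
      exact_mod_cast (hcard3 ▸ hcard2)
    linarith
  · intro z hz
    exact (hWs z (SimpleGraph.Walk.support_bypass_subset W hz)).2
  · intro p q hpq
    exact hWe p q (SimpleGraph.Walk.edges_bypass_subset W hpq)



end Delaunay
end
end
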